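/- arXiv:0905.2576 — 5 statements merged into one kernel-verified Lean document; each statement's English description precedes it below -/
import Mathlib

section
/- Let X be a continuum (compact connected metric space) and let C ⊆ X be minimal with the property that X − C is disconnected. Then C is closed in X. -/
open Set

section Defs

variable {X : Type*} [TopologicalSpace X]

/-- `U` is relatively open in the subspace `X - C`. -/
def RelOpen (C U : Set X) : Prop := ∃ O : Set X, IsOpen O ∧ U = O ∩ Cᶜ

/-- `U, V` form a disconnection of `X - C` into two nonempty relatively open sets. -/
def SepPair (C U V : Set X) : Prop :=
  RelOpen C U ∧ RelOpen C V ∧ Disjoint U V ∧ U ∪ V = Cᶜ ∧ U.Nonempty ∧ V.Nonempty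

/-- `C` separates `A` from `B`. -/
def Separates (C A B : Set X) : Prop := ∃ U V : Set X, SepPair C U V ∧ A ⊆ U ∧ B ⊆ V

/-- `C` separates `X`, i.e. `X - C` is disconnected. -/
def Cuts (C : Set X) : Prop := ∃ U V : Set X, SepPair C U V

def CutPoint (c : X) : Prop := Cuts ({c} : Set X)

def CutPair (c d : X) : Prop := c ≠ d ∧ ¬CutPoint c ∧ ¬CutPoint d ∧ Cuts ({c, d} : Set X)

def IsSubcontinuum (Y : Set X) : Prop := IsCompact Y ∧ IsConnected Y

/-- A nondegenerate set no two of whose points are separated by a cut pair. -/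
def InsepSet (A : Set X) : Prop :=
  A.Nontrivial ∧ ∀ c d : X, CutPair c d → ∀ a ∈ A, ∀ b ∈ A,
    ¬Separates ({c, d} : Set X) {a} {b}

def MaxInsep (A : Set X) : Prop := InsepSet A ∧ ∀ B : Set X, InsepSet B → A ⊆ B → B = A

def InsepCutPair (a b : X) : Prop := CutPair a b ∧ InsepSet ({a, b} : Set X)

/-- A cyclic decomposition of `X` by the points `x 0, …, x (n-1)` (cyclically indexed),
into subcontinua `M i`, consecutive ones meeting in a single point. -/
def CyclicDecomp (n : ℕ) (x : ZMod n → X) (M : ZMod n → Set X) : Prop :=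
  2 < n ∧ Function.Injective x ∧
  (∀ i, IsSubcontinuum (M i)) ∧
  (∀ i, M i ∩ M (i + 1) = {x (i + 1)}) ∧
  (∀ i j, i ≠ j → j ≠ i + 1 → i ≠ j + 1 → M i ∩ M j = ∅) ∧
  (⋃ i, M i) = univ

/-- A finite set is cyclic if it is a cut pair, or admits a cyclic decomposition. -/
def CyclicFinset (S : Set X) : Prop :=
  (∃ a b : X, CutPair a b ∧ S = {a, b}) ∨
  (∃ n : ℕ, ∃ (x : ZMod n → X) (M : ZMod n → Set X), CyclicDecomp n x M ∧ S = Set.range x)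

/-- A set (with more than one point) is cyclic if every finite subset with more
than one element is cyclic. -/
def CyclicSet (S : Set X) : Prop :=
  ∀ A : Finset X, ↑A ⊆ S → 1 < A.card → CyclicFinset (↑A : Set X)

/-- A necklace: a maximal cyclic subset with more than two elements. -/
def Necklace (S : Set X) : Prop :=
  CyclicSet S ∧ (∃ a ∈ S, ∃ b ∈ S, ∃ c ∈ S, a ≠ b ∧ a ≠ c ∧ b ≠ c) ∧
  ∀ S' : Set X, CyclicSet S' → S ⊆ S' → S' = S

/-- Membership in the collection `R`: necklaces, maximal inseparable sets,
and inseparable cut pairs. -/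
def InR (S : Set X) : Prop :=
  Necklace S ∨ MaxInsep S ∨ ∃ a b : X, InsepCutPair a b ∧ S = {a, b}

/-- `A` has exactly two connected components. -/
def TwoComponents (A : Set X) : Prop :=
  ∃ u ∈ A, ∃ v ∈ A, connectedComponentIn A u ≠ connectedComponentIn A v ∧
    ∀ w ∈ A, connectedComponentIn A w = connectedComponentIn A u ∨
      connectedComponentIn A w = connectedComponentIn A v

/-- `S`-equivalence of points of `X - S`: they lie in the same piece of every
cyclic decomposition of `X` by a finite subset of `S`. -/
def SEquiv (S : Set X) (y z : X) : Prop :=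
  y ∉ S ∧ z ∉ S ∧
  ∀ (n : ℕ) (x : ZMod n → X) (M : ZMod n → Set X),
    CyclicDecomp n x M → Set.range x ⊆ S → ∃ i, y ∈ M i ∧ z ∈ M i

end Defs

section Aux
variable {X : Type*} [TopologicalSpace X]

lemma aux_closure_disj {U O C : Set X} (hO : IsOpen O) (hU : U ⊆ Cᶜ)
    (hdisj : Disjoint U (O ∩ Cᶜ)) : closure U ∩ (O ∩ Cᶜ) = ∅ := by
  rw [eq_empty_iff_forall_notMem]
  rintro x ⟨hx, hxO, hxC⟩
  rcases mem_closure_iff.mp hx O hO hxO with ⟨y, hyO, hyU⟩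
  exact hdisj.ne_of_mem hyU ⟨hyO, hU hyU⟩ rfl

end Aux

/-- a minimal separating set of a continuum is closed. -/
theorem stmt0 {X : Type*} [MetricSpace X] [CompactSpace X] [ConnectedSpace X]
    (C : Set X) (hC : Cuts C) (hmin : ∀ D : Set X, D ⊆ C → Cuts D → D = C) :
    IsClosed C := by
  obtain ⟨U, V, ⟨O₁, hO₁, hUeq⟩, ⟨O₂, hO₂, hVeq⟩, hdisj, hunion, hUne, hVne⟩ := hC
  have hUsub : U ⊆ Cᶜ := by rw [hUeq]; exact inter_subset_right
  have hVsub : V ⊆ Cᶜ := by rw [hVeq]; exact inter_subset_right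
  -- closure U ∩ V = ∅ and closure V ∩ U = ∅
  have hUV : closure U ∩ V = ∅ := by
    rw [hVeq]; exact aux_closure_disj hO₂ hUsub (hVeq ▸ hdisj)
  have hVU : closure V ∩ U = ∅ := by
    rw [hUeq]; exact aux_closure_disj hO₁ hVsub (hUeq ▸ hdisj.symm)
  have hUV' : ∀ x, x ∈ closure U → x ∈ V → False := fun x h1 h2 =>
    eq_empty_iff_forall_notMem.mp hUV x ⟨h1, h2⟩
  have hVU' : ∀ x, x ∈ closure V → x ∈ U → False := fun x h1 h2 =>
    eq_empty_iff_forall_notMem.mp hVU x ⟨h1, h2⟩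
  have hDsub : closure U ∩ closure V ⊆ C := by
    intro x ⟨hxU, hxV⟩
    by_contra hxC
    have : x ∈ U ∪ V := hunion ▸ hxC
    rcases this with h | h
    · exact hVU' x hxV h
    · exact hUV' x hxU h
  -- closure U ∪ closure V = univ
  have hcover : closure U ∪ closure V = univ := by
    by_contra hne
    obtain ⟨w, hw⟩ := nonempty_compl.mpr hne
    simp only [mem_compl_iff, mem_union, not_or] at hw
    obtain ⟨hwU, hwV⟩ := hw
    have hwC : w ∈ C := by
      by_contra hwC
      rcases (hunion ▸ hwC : w ∈ U ∪ V) with h | h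
      · exact hwU (subset_closure h)
      · exact hwV (subset_closure h)
    have hDc : (C \ {w})ᶜ = Cᶜ ∪ {w} := by
      rw [Set.diff_eq, compl_inter, compl_compl]
    have hcuts : Cuts (C \ {w}) := by
      refine ⟨U ∪ {w}, V, ⟨(closure V)ᶜ, isClosed_closure.isOpen_compl, ?_⟩,
        ⟨(closure U)ᶜ ∩ {w}ᶜ,
          (isClosed_closure.isOpen_compl).inter isOpen_compl_singleton, ?_⟩,
        ?_, ?_, hUne.mono subset_union_left, hVne⟩
      · rw [hDc]
        ext x
        simp only [mem_union, mem_singleton_iff, mem_inter_iff, mem_compl_iff]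
        constructor
        · rintro (hx | rfl)
          · exact ⟨fun h => hVU' x h hx, Or.inl (hUsub hx)⟩
          · exact ⟨hwV, Or.inr rfl⟩
        · rintro ⟨hxV, hx | rfl⟩
          · rcases (hunion ▸ hx : x ∈ U ∪ V) with h | h
            · exact Or.inl h
            · exact absurd (subset_closure h) hxV
          · exact Or.inr rfl
      · rw [hDc]
        ext x
        simp only [mem_inter_iff, mem_compl_iff, mem_union, mem_singleton_iff]
        constructor
        · intro hx
          refine ⟨⟨fun h => hUV' x h hx,
            fun h => (hVsub hx) (h ▸ hwC)⟩, Or.inl (hVsub hx)⟩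
        · rintro ⟨⟨hxU, hxw⟩, hx | rfl⟩
          · rcases (hunion ▸ hx : x ∈ U ∪ V) with h | h
            · exact absurd (subset_closure h) hxU
            · exact h
          · exact absurd rfl hxw
      · rw [disjoint_union_left]
        exact ⟨hdisj, by
          simp only [disjoint_singleton_left]
          exact fun h => (hVsub h) hwC⟩
      · rw [hDc, ← hunion]
        ext x
        simp only [mem_union, mem_singleton_iff]
        tauto
    have heq := hmin (C \ {w}) diff_subset hcuts
    have : w ∈ C \ {w} := heq.symm ▸ hwC
    exact this.2 rfl
  -- Final: D := closure U ∩ closure V cuts, so C = D is closed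
  have hcuts : Cuts (closure U ∩ closure V) := by
    refine ⟨(closure V)ᶜ, (closure U)ᶜ,
      ⟨(closure V)ᶜ, isClosed_closure.isOpen_compl, ?_⟩,
      ⟨(closure U)ᶜ, isClosed_closure.isOpen_compl, ?_⟩, ?_, ?_, ?_, ?_⟩
    · rw [compl_inter, eq_comm, inter_eq_left]
      exact subset_union_right
    · rw [compl_inter, eq_comm, inter_eq_left]
      exact subset_union_left
    · rw [Set.disjoint_iff_inter_eq_empty, ← compl_union, union_comm, hcover,
        compl_univ]
    · rw [← compl_inter, inter_comm]
    · exact hUne.mono (fun x hx h => hVU' x h hx)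
    · exact hVne.mono (fun x hx h => hUV' x h hx)
  rw [← hmin _ hDsub hcuts]
  exact isClosed_closure.inter isClosed_closure
end

section
/- Let X be a continuum and C ⊆ X minimal with the property that X − C is disconnected. Then C separates A ⊆ X − C from B ⊆ X − C if and only if there exist subcontinua Y, Z of X with A ⊆ Y, B ⊆ Z, Y ∪ Z = X, and Y ∩ Z = C. -/
open Set

/-!
For a disconnection `X - C = U ∪ V`, the candidate subcontinua are `U ∪ C` and `V ∪ C`.
Minimality of `C` forces `C ⊆ closure U ∩ closure V` (a point of `C` away from `closure U`
could be moved to `V`), so `C` is closed, `U` and `V` are open, and `U ∪ C = Vᶜ` is compact.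
If `U ∪ C` split into closed pieces `P ∪ Q` with `P` meeting `U`, then `C ∩ P` would cut `X`
between `U ∩ P` and `V ∪ Pᶜ`, so `C ⊆ P` by minimality; but then `Q = U - P` is clopen in the
connected space `X`.
Conversely, closed `Y, Z` with `Y ∪ Z = X` and `Y ∩ Z = C` give the disconnection `Zᶜ, Yᶜ`.
-/

section Separation

variable {X : Type*} [TopologicalSpace X] {C U V : Set X}

theorem relOpen_iff_disjoint_closure (hU : U ⊆ Cᶜ) :
    RelOpen C U ↔ Disjoint U (closure (Cᶜ \ U)) := by
  constructor
  · rintro ⟨O, hO, rfl⟩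
    refine (Disjoint.closure_right ?_ hO).mono_left inter_subset_left
    exact disjoint_left.2 fun x hxO hx => hx.2 ⟨hxO, hx.1⟩
  · intro hd
    refine ⟨(closure (Cᶜ \ U))ᶜ, isClosed_closure.isOpen_compl, ?_⟩
    ext x
    refine ⟨fun hx => ⟨disjoint_left.1 hd hx, hU hx⟩, fun ⟨hxcl, hxC⟩ => ?_⟩
    by_contra hxU
    exact hxcl (subset_closure ⟨hxC, hxU⟩)

theorem sepPair_iff :
    SepPair C U V ↔ U ∪ V = Cᶜ ∧ Disjoint U (closure V) ∧ Disjoint (closure U) V ∧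
      U.Nonempty ∧ V.Nonempty := by
  have key : U ∪ V = Cᶜ → Disjoint U V → Cᶜ \ U = V ∧ Cᶜ \ V = U := fun hUV hd => by
    rw [← hUV]
    exact ⟨union_sdiff_cancel_left (disjoint_iff_inter_eq_empty.1 hd).subset,
      union_sdiff_cancel_right (disjoint_iff_inter_eq_empty.1 hd).subset⟩
  have hUC : U ∪ V = Cᶜ → U ⊆ Cᶜ := fun h => h ▸ subset_union_left
  have hVC : U ∪ V = Cᶜ → V ⊆ Cᶜ := fun h => h ▸ subset_union_right
  constructor
  · rintro ⟨hU, hV, hd, hUV, hUne, hVne⟩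
    obtain ⟨hCU, hCV⟩ := key hUV hd
    rw [relOpen_iff_disjoint_closure (hUC hUV), hCU] at hU
    rw [relOpen_iff_disjoint_closure (hVC hUV), hCV] at hV
    exact ⟨hUV, hU, hV.symm, hUne, hVne⟩
  · rintro ⟨hUV, hU, hV, hUne, hVne⟩
    have hd : Disjoint U V := hU.mono_right subset_closure
    obtain ⟨hCU, hCV⟩ := key hUV hd
    refine ⟨?_, ?_, hd, hUV, hUne, hVne⟩
    · rwa [relOpen_iff_disjoint_closure (hUC hUV), hCU]
    · rw [relOpen_iff_disjoint_closure (hVC hUV), hCV]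
      exact hV.symm

theorem SepPair.of_isOpen (hU : IsOpen U) (hV : IsOpen V) (hd : Disjoint U V)
    (hUV : U ∪ V = Cᶜ) (hUne : U.Nonempty) (hVne : V.Nonempty) : SepPair C U V :=
  ⟨⟨U, hU, (inter_eq_left.2 (hUV ▸ subset_union_left)).symm⟩,
    ⟨V, hV, (inter_eq_left.2 (hUV ▸ subset_union_right)).symm⟩, hd, hUV, hUne, hVne⟩

theorem SepPair.symm (h : SepPair C U V) : SepPair C V U :=
  ⟨h.2.1, h.1, h.2.2.1.symm, union_comm U V ▸ h.2.2.2.1, h.2.2.2.2.2, h.2.2.2.2.1⟩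

theorem SepPair.union_eq_compl_right (h : SepPair C U V) : U ∪ C = Vᶜ := by
  have hd := h.2.2.1
  rw [← compl_compl C, ← h.2.2.2.1]
  ext x
  have hx : x ∈ U → x ∉ V := fun hxU => disjoint_left.1 hd hxU
  simp only [mem_union, mem_compl_iff]
  tauto

theorem separates_of_union_eq_univ {A B Y Z : Set X} (hY : IsClosed Y) (hZ : IsClosed Z)
    (hYZ : Y ∪ Z = univ) (hYZC : Y ∩ Z = C) (hAY : A ⊆ Y) (hBZ : B ⊆ Z)
    (hA : A ⊆ Cᶜ) (hB : B ⊆ Cᶜ) (hAne : A.Nonempty) (hBne : B.Nonempty) :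
    Separates C A B := by
  have hAZ : A ⊆ Zᶜ := fun a ha haZ => hA ha (hYZC ▸ ⟨hAY ha, haZ⟩)
  have hBY : B ⊆ Yᶜ := fun b hb hbY => hB hb (hYZC ▸ ⟨hbY, hBZ hb⟩)
  refine ⟨Zᶜ, Yᶜ, .of_isOpen hZ.isOpen_compl hY.isOpen_compl ?_ ?_ (hAne.mono hAZ)
    (hBne.mono hBY), hAZ, hBY⟩
  · rw [disjoint_iff_inter_eq_empty, ← compl_union, union_comm, hYZ, compl_univ]
  · rw [← compl_inter, inter_comm, hYZC]

end Separation

section MinimalCut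

variable {X : Type*} [TopologicalSpace X] [T1Space X] {C U V : Set X}

theorem SepPair.subset_closure_left (hmin : ∀ D : Set X, D ⊆ C → Cuts D → D = C)
    (h : SepPair C U V) : C ⊆ closure U := by
  intro c hc
  by_contra hcU
  obtain ⟨hUV, hUcV, hcUV, hUne, hVne⟩ := sepPair_iff.1 h
  have hcut : Cuts (C \ {c}) := by
    refine ⟨U, V ∪ {c}, sepPair_iff.2 ⟨?_, ?_, ?_, hUne, hVne.mono subset_union_left⟩⟩
    · rw [← union_assoc, hUV, compl_sdiff, union_comm]
    · rw [closure_union, closure_singleton, disjoint_union_right, disjoint_singleton_right]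
      exact ⟨hUcV, fun hcU' => (hUV ▸ subset_union_left : U ⊆ Cᶜ) hcU' hc⟩
    · rw [disjoint_union_right, disjoint_singleton_right]
      exact ⟨hcUV, hcU⟩
  have hcc : c ∈ C \ {c} := (hmin _ sdiff_subset hcut).symm ▸ hc
  exact hcc.2 rfl

theorem SepPair.isClosed_of_minimal (hmin : ∀ D : Set X, D ⊆ C → Cuts D → D = C)
    (h : SepPair C U V) : IsClosed C := by
  obtain ⟨hUV, hUcV, hcUV, -, -⟩ := sepPair_iff.1 h
  refine closure_subset_iff_isClosed.1 fun x hx => ?_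
  have hxU : x ∈ closure U := closure_minimal (h.subset_closure_left hmin) isClosed_closure hx
  have hxV : x ∈ closure V :=
    closure_minimal (h.symm.subset_closure_left hmin) isClosed_closure hx
  by_contra hxC
  have hxUV : x ∈ U ∪ V := by rw [hUV]; exact hxC
  rcases hxUV with hxU' | hxV'
  · exact disjoint_left.1 hUcV hxU' hxV
  · exact disjoint_left.1 hcUV hxU hxV'

theorem SepPair.isOpen_left (hmin : ∀ D : Set X, D ⊆ C → Cuts D → D = C)
    (h : SepPair C U V) : IsOpen U := by
  obtain ⟨hUV, hUcV, -, -, -⟩ := sepPair_iff.1 h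
  have hU : U = (closure V ∪ C)ᶜ := by
    ext x
    have hx : x ∉ C ↔ x ∈ U ∨ x ∈ V := by rw [← mem_compl_iff, ← hUV]; rfl
    have hUcl : x ∈ U → x ∉ closure V := fun hxU => disjoint_left.1 hUcV hxU
    have hVcl : x ∈ V → x ∈ closure V := fun hxV => subset_closure hxV
    simp only [mem_compl_iff, mem_union]
    tauto
  rw [hU]
  exact (isClosed_closure.union (h.isClosed_of_minimal hmin)).isOpen_compl

theorem SepPair.isClosed_union (hmin : ∀ D : Set X, D ⊆ C → Cuts D → D = C)
    (h : SepPair C U V) : IsClosed (U ∪ C) :=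
  h.union_eq_compl_right ▸ (h.symm.isOpen_left hmin).isClosed_compl

theorem SepPair.union_subset_of_inter_nonempty [ConnectedSpace X]
    (hmin : ∀ D : Set X, D ⊆ C → Cuts D → D = C) (h : SepPair C U V) {u v : Set X}
    (hu : IsClosed u) (hv : IsClosed v) (hsub : U ∪ C ⊆ u ∪ v) (huv : Disjoint u v)
    (hUu : (U ∩ u).Nonempty) : U ∪ C ⊆ u := by
  have hUo := h.isOpen_left hmin
  have hVo := h.symm.isOpen_left hmin
  have hVc := h.isClosed_union hmin
  obtain ⟨-, -, hd, hUV, -, hVne⟩ := h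
  have hCu : C ⊆ u := by
    have hcut : Cuts (C ∩ u) := by
      refine ⟨U \ v, V ∪ uᶜ, .of_isOpen (hUo.sdiff hv) (hVo.union hu.isOpen_compl) ?_ ?_
        (hUu.mono fun x hx => ⟨hx.1, disjoint_left.1 huv hx.2⟩) (hVne.mono subset_union_left)⟩
      · refine disjoint_left.2 fun x ⟨hxU, hxv⟩ hx => ?_
        rcases hx with hxV | hxu
        · exact disjoint_left.1 hd hxU hxV
        · exact (hsub (Or.inl hxU)).elim hxu hxv
      · ext x
        have hx : x ∉ C ↔ x ∈ U ∨ x ∈ V := by rw [← mem_compl_iff, ← hUV]; rfl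
        have hxUuv : x ∈ U → x ∈ u ∨ x ∈ v := fun hxU => hsub (Or.inl hxU)
        have hxuv : x ∈ u → x ∉ v := fun hxu => disjoint_left.1 huv hxu
        simp only [mem_union, mem_sdiff, mem_compl_iff, mem_inter_iff]
        tauto
    exact inter_eq_left.1 (hmin _ inter_subset_left hcut)
  have hUv : U ∩ v = (U ∪ C) ∩ v := by
    rw [union_inter_distrib_right, (disjoint_iff_inter_eq_empty.1 (huv.mono_left hCu)),
      union_empty]
  have hUv' : U ∩ v = U \ u := by
    ext x
    exact ⟨fun hx => ⟨hx.1, fun hxu => disjoint_left.1 huv hxu hx.2⟩,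
      fun hx => ⟨hx.1, (hsub (Or.inl hx.1)).resolve_left hx.2⟩⟩
  have hclopen : IsClopen (U ∩ v) := ⟨hUv ▸ hVc.inter hv, hUv' ▸ hUo.sdiff hu⟩
  have hUv_empty : U ∩ v = ∅ := by
    refine (isClopen_iff.1 hclopen).resolve_right fun huniv => ?_
    obtain ⟨y, hy⟩ := hVne
    exact disjoint_left.1 hd (huniv ▸ mem_univ y : y ∈ U ∩ v).1 hy
  refine union_subset (fun x hxU => (hsub (Or.inl hxU)).resolve_right fun hxv => ?_) hCu
  exact (hUv_empty ▸ ⟨hxU, hxv⟩ : x ∈ (∅ : Set X))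

theorem SepPair.isConnected_union [ConnectedSpace X]
    (hmin : ∀ D : Set X, D ⊆ C → Cuts D → D = C) (h : SepPair C U V) :
    IsConnected (U ∪ C) := by
  have hVc := h.isClosed_union hmin
  obtain ⟨x, hx⟩ := h.2.2.2.2.1
  refine ⟨⟨x, Or.inl hx⟩, (isPreconnected_iff_subset_of_fully_disjoint_closed hVc).2 ?_⟩
  intro u v hu hv hsub huv
  rcases hsub (Or.inl hx) with hxu | hxv
  · exact Or.inl (h.union_subset_of_inter_nonempty hmin hu hv hsub huv ⟨x, hx, hxu⟩)
  · exact Or.inr (h.union_subset_of_inter_nonempty hmin hv hu (union_comm u v ▸ hsub) huv.symm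
      ⟨x, hx, hxv⟩)

theorem SepPair.isSubcontinuum_union [CompactSpace X] [ConnectedSpace X]
    (hmin : ∀ D : Set X, D ⊆ C → Cuts D → D = C) (h : SepPair C U V) :
    IsSubcontinuum (U ∪ C) :=
  ⟨(h.isClosed_union hmin).isCompact, h.isConnected_union hmin⟩

end MinimalCut

theorem stmt2_general {X : Type*} [MetricSpace X] [CompactSpace X] [ConnectedSpace X]
    (C A B : Set X) (hmin : ∀ D : Set X, D ⊆ C → Cuts D → D = C)
    (hA : A ⊆ Cᶜ) (hB : B ⊆ Cᶜ) (hAne : A.Nonempty) (hBne : B.Nonempty) :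
    Separates C A B ↔
      ∃ Y Z : Set X, IsSubcontinuum Y ∧ IsSubcontinuum Z ∧
        A ⊆ Y ∧ B ⊆ Z ∧ Y ∪ Z = Set.univ ∧ Y ∩ Z = C := by
  constructor
  · rintro ⟨U, V, h, hAU, hBV⟩
    refine ⟨U ∪ C, V ∪ C, h.isSubcontinuum_union hmin, h.symm.isSubcontinuum_union hmin,
      hAU.trans subset_union_left, hBV.trans subset_union_left, ?_, ?_⟩
    · rw [h.union_eq_compl_right, ← union_assoc, compl_union_self, univ_union]
    · rw [h.union_eq_compl_right, h.symm.union_eq_compl_right, ← compl_union, union_comm,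
        h.2.2.2.1, compl_compl]
  · rintro ⟨Y, Z, hY, hZ, hAY, hBZ, hYZ, hYZC⟩
    exact separates_of_union_eq_univ hY.1.isClosed hZ.1.isClosed hYZ hYZC hAY hBZ hA hB hAne hBne

theorem stmt2 {X : Type*} [MetricSpace X] [CompactSpace X] [ConnectedSpace X]
    (C A B : Set X) (hC : Cuts C) (hmin : ∀ D : Set X, D ⊆ C → Cuts D → D = C)
    (hA : A ⊆ Cᶜ) (hB : B ⊆ Cᶜ) (hAne : A.Nonempty) (hBne : B.Nonempty) :
    Separates C A B ↔
      ∃ Y Z : Set X, IsSubcontinuum Y ∧ IsSubcontinuum Z ∧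
        A ⊆ Y ∧ B ⊆ Z ∧ Y ∪ Z = Set.univ ∧ Y ∩ Z = C :=
  stmt2_general C A B hmin hA hB hAne hBne
end

section
/- Let X be a connected metric space without cut points. If a cut pair {a,b} separates the points of a cut pair {c,d}, then {c,d} separates a from b, and moreover X − {c,d} has exactly two connected components and X − {a,b} has exactly two connected components. -/
open Set

section Aux

variable {X : Type*} [MetricSpace X]

lemma sepPair_isOpen_left {C U V : Set X} (hC : IsClosed C) (h : SepPair C U V) :
    IsOpen U := by
  obtain ⟨⟨O, hO, rfl⟩, _⟩ := h
  exact hO.inter hC.isOpen_compl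

lemma sepPair_symm {C U V : Set X} (h : SepPair C U V) : SepPair C V U := by
  obtain ⟨h1, h2, h3, h4, h5, h6⟩ := h
  exact ⟨h2, h1, h3.symm, by rw [Set.union_comm]; exact h4, h6, h5⟩

lemma sepPair_closure_left {C U V : Set X} (hC : IsClosed C) (h : SepPair C U V) :
    closure U ⊆ U ∪ C := by
  have hV : IsOpen V := sepPair_isOpen_left hC (sepPair_symm h)
  have hdisj : Disjoint (closure U) V := (h.2.2.1).closure_left hV
  intro x hx
  by_cases hxC : x ∈ C
  · exact Or.inr hxC
  · have : x ∈ U ∪ V := by rw [h.2.2.2.1]; exact hxC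
    rcases this with h' | h'
    · exact Or.inl h'
    · exact absurd h' (disjoint_left.mp hdisj hx)

lemma sepPair_subset_compl {C U V : Set X} (h : SepPair C U V) : U ⊆ Cᶜ := by
  rw [← h.2.2.2.1]; exact subset_union_left

/-- If `P` is a nonempty open set whose boundary is at most `{c}` and whose
complement (apart from `c`) is nonempty, then `c` is a cut point. -/
lemma empty_of_small_bd (hnc : ∀ x : X, ¬CutPoint x) {c : X} {P : Set X}
    (hP : IsOpen P) (hcl : closure P ⊆ P ∪ {c}) (hcP : c ∉ P)
    (hne : ((P ∪ {c})ᶜ).Nonempty) : P = ∅ := by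
  by_contra h
  apply hnc c
  have hclP : closure P ∪ {c} = P ∪ {c} :=
    Set.Subset.antisymm (union_subset hcl subset_union_right)
      (union_subset (subset_closure.trans subset_union_left) subset_union_right)
  refine ⟨P, (P ∪ {c})ᶜ, ⟨P, hP, ?_⟩, ⟨(closure P)ᶜ, isClosed_closure.isOpen_compl, ?_⟩,
    ?_, ?_, nonempty_iff_ne_empty.mpr h, hne⟩
  · ext x; simp only [mem_inter_iff, mem_compl_iff, mem_singleton_iff]
    exact ⟨fun hx => ⟨hx, fun e => hcP (e ▸ hx)⟩, fun hx => hx.1⟩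
  · rw [← compl_union, hclP]
  · rw [Set.disjoint_left]; intro x hx hx'
    exact hx' (Or.inl hx)
  · ext x
    simp only [mem_union, mem_compl_iff, mem_singleton_iff]
    constructor
    · rintro (hx | hx)
      · exact fun e => hcP (e ▸ hx)
      · exact fun e => hx (Or.inr e)
    · intro hx
      by_cases hxP : x ∈ P
      · exact Or.inl hxP
      · exact Or.inr (fun h' => h'.elim hxP hx)

/-- Key lemma: an open set `Q` with boundary in `{c, d}`, avoiding `a, b, c, d`,
must be empty, given a separation `U, V` of `X - {a,b}` with `c ∈ U`, `d ∈ V`. -/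
lemma side_empty (hnc : ∀ x : X, ¬CutPoint x) {a b c d : X} {U V Q : Set X}
    (hUV : SepPair ({a, b} : Set X) U V) (hcU : c ∈ U) (hdV : d ∈ V) (hcd : c ≠ d)
    (hQ : IsOpen Q) (hclQ : closure Q ⊆ Q ∪ {c, d}) (hcQ : c ∉ Q) (hdQ : d ∉ Q)
    (haQ : a ∉ Q) (hbQ : b ∉ Q) : Q = ∅ := by
  have hCcl : IsClosed ({a, b} : Set X) := (Set.toFinite _).isClosed
  have hUo : IsOpen U := sepPair_isOpen_left hCcl hUV
  have hVo : IsOpen V := sepPair_isOpen_left hCcl (sepPair_symm hUV)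
  have hUcl : closure U ⊆ U ∪ {a, b} := sepPair_closure_left hCcl hUV
  have hVcl : closure V ⊆ V ∪ {a, b} := sepPair_closure_left hCcl (sepPair_symm hUV)
  have hdisjUV : Disjoint U V := hUV.2.2.1
  have hcab : c ∉ ({a, b} : Set X) := sepPair_subset_compl hUV hcU
  have hdab : d ∉ ({a, b} : Set X) := sepPair_subset_compl (sepPair_symm hUV) hdV
  have hQU : Q ∩ U = ∅ := by
    refine empty_of_small_bd hnc (hQ.inter hUo) ?_ (fun h => hcQ h.1) ⟨d, ?_⟩
    · intro x hx
      have hx1 := hclQ (closure_mono inter_subset_left hx)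
      have hx2 := hUcl (closure_mono inter_subset_right hx)
      rcases hx1 with hx1 | hx1
      · rcases hx2 with hx2 | hx2
        · exact Or.inl ⟨hx1, hx2⟩
        · rcases hx2 with rfl | rfl
          · exact absurd hx1 haQ
          · exact absurd hx1 hbQ
      · rcases hx1 with rfl | rfl
        · exact Or.inr rfl
        · rcases hx2 with hx2 | hx2
          · exact absurd hx2 (disjoint_right.mp hdisjUV hdV)
          · exact absurd hx2 hdab
    · simp only [mem_compl_iff, mem_union, mem_inter_iff, mem_singleton_iff]
      rintro (⟨h1, -⟩ | h1)
      · exact hdQ h1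
      · exact hcd h1.symm
  have hQV : Q ∩ V = ∅ := by
    refine empty_of_small_bd hnc (hQ.inter hVo) ?_ (fun h => hdQ h.1) ⟨c, ?_⟩
    · intro x hx
      have hx1 := hclQ (closure_mono inter_subset_left hx)
      have hx2 := hVcl (closure_mono inter_subset_right hx)
      rcases hx1 with hx1 | hx1
      · rcases hx2 with hx2 | hx2
        · exact Or.inl ⟨hx1, hx2⟩
        · rcases hx2 with rfl | rfl
          · exact absurd hx1 haQ
          · exact absurd hx1 hbQ
      · rcases hx1 with rfl | rfl
        · rcases hx2 with hx2 | hx2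
          · exact absurd hx2 (disjoint_left.mp hdisjUV hcU)
          · exact absurd hx2 hcab
        · exact Or.inr rfl
    · simp only [mem_compl_iff, mem_union, mem_inter_iff, mem_singleton_iff]
      rintro (⟨h1, -⟩ | h1)
      · exact hcQ h1
      · exact hcd h1
  have hQab : Q ⊆ U ∪ V := by
    rw [hUV.2.2.2.1]
    intro x hx hx'
    rcases hx' with rfl | rfl
    · exact haQ hx
    · exact hbQ hx
  ext x
  simp only [mem_empty_iff_false, iff_false]
  intro hx
  rcases hQab hx with h' | h'
  · exact (hQU ▸ (⟨hx, h'⟩ : x ∈ Q ∩ U) : x ∈ (∅ : Set X))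
  · exact (hQV ▸ (⟨hx, h'⟩ : x ∈ Q ∩ V) : x ∈ (∅ : Set X))

/-- A side of a crossing separation is connected. -/
lemma side_connected (hnc : ∀ x : X, ¬CutPoint x) {a b c d : X} {U V W W' : Set X}
    (hUV : SepPair ({a, b} : Set X) U V) (hcU : c ∈ U) (hdV : d ∈ V) (hcd : c ≠ d)
    (hWW' : SepPair ({c, d} : Set X) W W') (haW : a ∈ W) (hbW' : b ∈ W') :
    IsPreconnected W := by
  have hDcl : IsClosed ({c, d} : Set X) := (Set.toFinite _).isClosed
  have hWo : IsOpen W := sepPair_isOpen_left hDcl hWW'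
  have hW'o : IsOpen W' := sepPair_isOpen_left hDcl (sepPair_symm hWW')
  have hdisj : Disjoint W W' := hWW'.2.2.1
  have hWcd : W ⊆ ({c, d} : Set X)ᶜ := sepPair_subset_compl hWW'
  have hW'cd : W' ⊆ ({c, d} : Set X)ᶜ := sepPair_subset_compl (sepPair_symm hWW')
  intro u v hu hv hWuv hWu hWv
  by_contra hempty
  rw [Set.not_nonempty_iff_eq_empty] at hempty
  set P := W ∩ u with hPdef
  set R := W ∩ v with hRdef
  have hPo : IsOpen P := hWo.inter hu
  have hRo : IsOpen R := hWo.inter hv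
  have hPR : P ∪ R = W := by
    apply Set.Subset.antisymm (union_subset inter_subset_left inter_subset_left)
    intro x hx
    rcases hWuv hx with h | h
    · exact Or.inl ⟨hx, h⟩
    · exact Or.inr ⟨hx, h⟩
  have hdisjPR : Disjoint P R := by
    rw [Set.disjoint_left]
    intro x hxP hxR
    exact Set.eq_empty_iff_forall_notMem.mp hempty x ⟨hxP.1, hxP.2, hxR.2⟩
  have key : ∀ Q S : Set X, IsOpen Q → IsOpen S → Q ∪ S = W → Disjoint Q S →
      a ∉ Q → Q = ∅ := by
    intro Q S hQo hSo hQS hdisjQS haQ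
    have hQW : Q ⊆ W := hQS ▸ subset_union_left
    have hclQ : closure Q ⊆ Q ∪ {c, d} := by
      have h1 : Disjoint (closure Q) S := hdisjQS.closure_left hSo
      have h2 : Disjoint (closure Q) W' :=
        (Set.disjoint_of_subset_left hQW hdisj).closure_left hW'o
      intro x hx
      by_cases hxcd : x ∈ ({c, d} : Set X)
      · exact Or.inr hxcd
      · have : x ∈ W ∪ W' := by rw [hWW'.2.2.2.1]; exact hxcd
        rcases this with h | h
        · rcases (hQS ▸ h : x ∈ Q ∪ S) with h' | h'
          · exact Or.inl h'
          · exact absurd h' (Set.disjoint_left.mp h1 hx)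
        · exact absurd h (Set.disjoint_left.mp h2 hx)
    exact side_empty hnc hUV hcU hdV hcd hQo hclQ
      (fun h => (hWcd (hQW h)) (Or.inl rfl)) (fun h => (hWcd (hQW h)) (Or.inr rfl))
      haQ (fun h => Set.disjoint_left.mp hdisj (hQW h) hbW')
  rcases (hPR ▸ haW : a ∈ P ∪ R) with haP | haR
  · have : R = ∅ := key R P hRo hPo (by rw [Set.union_comm]; exact hPR) hdisjPR.symm
      (fun h => Set.disjoint_left.mp hdisjPR haP h)
    exact absurd (this ▸ hWv) (by simp)
  · have : P = ∅ := key P R hPo hRo hPR hdisjPR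
      (fun h => Set.disjoint_left.mp hdisjPR h haR)
    exact absurd (this ▸ hWu) (by simp)

lemma comp_eq {A W W' : Set X} (hA : W ∪ W' = A) (hWo : IsOpen W) (hW'o : IsOpen W')
    (hdisj : Disjoint W W') (hconn : IsPreconnected W) {w : X} (hw : w ∈ W) :
    connectedComponentIn A w = W := by
  apply Set.Subset.antisymm
  · exact isPreconnected_connectedComponentIn.subset_left_of_subset_union hWo hW'o hdisj
      (hA ▸ connectedComponentIn_subset A w)
      ⟨w, mem_connectedComponentIn (hA ▸ Or.inl hw : w ∈ A), hw⟩
  · exact hconn.subset_connectedComponentIn hw (hA ▸ subset_union_left)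

lemma two_components {A W W' : Set X} {p q : X} (hA : W ∪ W' = A) (hWo : IsOpen W)
    (hW'o : IsOpen W') (hdisj : Disjoint W W') (hWc : IsPreconnected W)
    (hW'c : IsPreconnected W') (hp : p ∈ W) (hq : q ∈ W') : TwoComponents A := by
  have hpA : p ∈ A := hA ▸ Or.inl hp
  have hqA : q ∈ A := hA ▸ Or.inr hq
  have hcp : connectedComponentIn A p = W := comp_eq hA hWo hW'o hdisj hWc hp
  have hcq : connectedComponentIn A q = W' := by
    apply comp_eq (W := W') (W' := W) _ hW'o hWo hdisj.symm hW'c hq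
    rw [Set.union_comm]; exact hA
  refine ⟨p, hpA, q, hqA, ?_, ?_⟩
  · rw [hcp, hcq]
    intro h
    exact Set.disjoint_left.mp hdisj hp (h ▸ hp)
  · intro w hw
    rcases (hA ▸ hw : w ∈ W ∪ W') with h | h
    · left; rw [hcp]; exact comp_eq hA hWo hW'o hdisj hWc h
    · right; rw [hcq]
      apply comp_eq (W := W') (W' := W) _ hW'o hWo hdisj.symm hW'c h
      rw [Set.union_comm]; exact hA

end Aux


theorem stmt5 {X : Type*} [MetricSpace X] [ConnectedSpace X]
    (hnc : ∀ x : X, ¬CutPoint x) (a b c d : X)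
    (hab : CutPair a b) (hcd : CutPair c d)
    (hsep : Separates ({a, b} : Set X) {c} {d}) :
    Separates ({c, d} : Set X) {a} {b} ∧
      TwoComponents (({c, d} : Set X)ᶜ) ∧ TwoComponents (({a, b} : Set X)ᶜ) := by
  obtain ⟨U, V, hUV, hcUs, hdVs⟩ := hsep
  have hcU : c ∈ U := hcUs rfl
  have hdV : d ∈ V := hdVs rfl
  have hcd' : c ≠ d := hcd.1
  have hab' : a ≠ b := hab.1
  have hCcl : IsClosed ({a, b} : Set X) := (Set.toFinite _).isClosed
  have hDcl : IsClosed ({c, d} : Set X) := (Set.toFinite _).isClosed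
  have hUo : IsOpen U := sepPair_isOpen_left hCcl hUV
  have hVo : IsOpen V := sepPair_isOpen_left hCcl (sepPair_symm hUV)
  have hcab : c ∉ ({a, b} : Set X) := sepPair_subset_compl hUV hcU
  have hdab : d ∉ ({a, b} : Set X) := sepPair_subset_compl (sepPair_symm hUV) hdV
  have hacd : a ∉ ({c, d} : Set X) := by
    rintro (h | h)
    · exact hcab (Or.inl h.symm)
    · exact hdab (Or.inl h.symm)
  have hbcd : b ∉ ({c, d} : Set X) := by
    rintro (h | h)
    · exact hcab (Or.inr h.symm)
    · exact hdab (Or.inr h.symm)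
  obtain ⟨W₀, W₁, hW⟩ := hcd.2.2.2
  have hW0o : IsOpen W₀ := sepPair_isOpen_left hDcl hW
  have hW1o : IsOpen W₁ := sepPair_isOpen_left hDcl (sepPair_symm hW)
  have hW0cl : closure W₀ ⊆ W₀ ∪ {c, d} := sepPair_closure_left hDcl hW
  have hW1cl : closure W₁ ⊆ W₁ ∪ {c, d} := sepPair_closure_left hDcl (sepPair_symm hW)
  have hW0cd : W₀ ⊆ ({c, d} : Set X)ᶜ := sepPair_subset_compl hW
  have hW1cd : W₁ ⊆ ({c, d} : Set X)ᶜ := sepPair_subset_compl (sepPair_symm hW)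
  have hdisjW : Disjoint W₀ W₁ := hW.2.2.1
  have haWW : a ∈ W₀ ∪ W₁ := by rw [hW.2.2.2.1]; exact hacd
  have hbWW : b ∈ W₀ ∪ W₁ := by rw [hW.2.2.2.1]; exact hbcd
  obtain ⟨W, W', hWW', haW, hbW'⟩ :
      ∃ W W' : Set X, SepPair ({c, d} : Set X) W W' ∧ a ∈ W ∧ b ∈ W' := by
    rcases haWW with ha | ha <;> rcases hbWW with hb | hb
    · exfalso
      have h1 : W₁ = ∅ := side_empty hnc hUV hcU hdV hcd' hW1o hW1cl
        (fun h => hW1cd h (Or.inl rfl)) (fun h => hW1cd h (Or.inr rfl))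
        (fun h => Set.disjoint_left.mp hdisjW ha h)
        (fun h => Set.disjoint_left.mp hdisjW hb h)
      exact absurd hW.2.2.2.2.2 (by rw [h1]; simp)
    · exact ⟨W₀, W₁, hW, ha, hb⟩
    · exact ⟨W₁, W₀, sepPair_symm hW, ha, hb⟩
    · exfalso
      have h1 : W₀ = ∅ := side_empty hnc hUV hcU hdV hcd' hW0o hW0cl
        (fun h => hW0cd h (Or.inl rfl)) (fun h => hW0cd h (Or.inr rfl))
        (fun h => Set.disjoint_left.mp hdisjW h ha)
        (fun h => Set.disjoint_left.mp hdisjW h hb)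
      exact absurd hW.2.2.2.2.1 (by rw [h1]; simp)
  have hWo : IsOpen W := sepPair_isOpen_left hDcl hWW'
  have hW'o : IsOpen W' := sepPair_isOpen_left hDcl (sepPair_symm hWW')
  have hdisj : Disjoint W W' := hWW'.2.2.1
  have hWconn : IsPreconnected W := side_connected hnc hUV hcU hdV hcd' hWW' haW hbW'
  have hUV' : SepPair ({b, a} : Set X) V U := by
    rw [Set.pair_comm]; exact sepPair_symm hUV
  have hWW'' : SepPair ({d, c} : Set X) W' W := by
    rw [Set.pair_comm]; exact sepPair_symm hWW'
  have hW'conn : IsPreconnected W' :=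
    side_connected hnc hUV' hdV hcU hcd'.symm hWW'' hbW' haW
  have hUconn : IsPreconnected U := side_connected hnc hWW' haW hbW' hab' hUV hcU hdV
  have hVconn : IsPreconnected V :=
    side_connected hnc hWW'' hbW' haW hab'.symm hUV' hdV hcU
  refine ⟨⟨W, W', hWW', singleton_subset_iff.mpr haW, singleton_subset_iff.mpr hbW'⟩, ?_, ?_⟩
  · exact two_components hWW'.2.2.2.1 hWo hW'o hdisj hWconn hW'conn haW hbW'
  · exact two_components hUV.2.2.2.1 hUo hVo hUV.2.2.1 hUconn hVconn hcU hdV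
end

section
/- Let X be a Peano continuum (locally connected continuum), and let A be a nonsingleton equivalence class of the cut-point equivalence relation on X (two non-cut points are equivalent if no cut point separates them). Then the closure of A is a Peano continuum without cut points. -/
open Set

/-!
For a non-cut point `a`, let `B` be the set of points not separated from `a` by any cut point;
the class `A` is the set of non-cut points of `B`. For a cut point `c`, the part of `X ∖ {c}` cut
off from `a` is open, and these branches are nested or disjoint. Each point outside `B` lies in a
cluster of branches, an open set whose frontier is a single point of `B`; sending the cluster to
that point gives a retraction `r : X → B`, which is continuous by local connectedness. Hence
`N ∩ B = r '' N` is preconnected for every preconnected `N` meeting `B`. This makes `B`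
connected and locally connected, and shows that `B ∖ {e} = N ∩ B` is connected for every
`e ∈ B`: take `N = X ∖ {e}` if `e` is not a cut point of `X`, and `N` the component of `a` in
`X ∖ {e}` otherwise. Finally `B` is the closure of `A`: the branches at cut points of `B` are
pairwise disjoint open sets, so `B` has only countably many cut points, while every nonempty
open subset of `B` contains an uncountable connected set.
-/

open Topology

section Separation

variable {X : Type*} [TopologicalSpace X]

theorem ne_of_not_cutPoint {a c : X} (ha : ¬CutPoint a) (hc : CutPoint c) : a ≠ c :=
  fun h => ha (h ▸ hc)

theorem IsPreconnected.subset_of_sepPair {C U V S : Set X} (hS : IsPreconnected S)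
    (hSC : S ⊆ Cᶜ) (hUV : SepPair C U V) (hSU : (S ∩ U).Nonempty) : S ⊆ U := by
  obtain ⟨⟨O₁, hO₁, rfl⟩, ⟨O₂, hO₂, rfl⟩, hdisj, hcover, -, -⟩ := hUV
  have hmem : ∀ y ∈ S, y ∈ O₁ ∩ Cᶜ ∨ y ∈ O₂ ∩ Cᶜ := fun y hy => hcover.ge (hSC hy)
  intro y hy
  refine (hmem y hy).resolve_right fun hyV => ?_
  obtain ⟨u, huS, huU⟩ := hSU
  obtain ⟨z, hzS, hz₁, hz₂⟩ := hS O₁ O₂ hO₁ hO₂ (fun x hx => (hmem x hx).imp And.left And.left)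
    ⟨u, huS, huU.1⟩ ⟨y, hy, hyV.1⟩
  exact disjoint_left.1 hdisj ⟨hz₁, hSC hzS⟩ ⟨hz₂, hSC hzS⟩

theorem isPreconnected_compl_iff_not_cuts {C : Set X} : IsPreconnected Cᶜ ↔ ¬Cuts C := by
  constructor
  · rintro hC ⟨U, V, hUV⟩
    obtain ⟨-, -, hdisj, hcover, ⟨u, hu⟩, ⟨v, hv⟩⟩ := id hUV
    have hCU : Cᶜ ⊆ U := hC.subset_of_sepPair subset_rfl hUV ⟨u, hcover.le (Or.inl hu), hu⟩
    exact disjoint_left.1 hdisj (hCU (hcover.le (Or.inr hv))) hv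
  · intro hC u v hu hv hcover ⟨x, hxC, hxu⟩ ⟨y, hyC, hyv⟩
    by_contra huv
    refine hC ⟨u ∩ Cᶜ, v ∩ Cᶜ, ⟨u, hu, rfl⟩, ⟨v, hv, rfl⟩, ?_, ?_, ⟨x, hxu, hxC⟩, ⟨y, hyv, hyC⟩⟩
    · exact disjoint_left.2 fun z hzu hzv => huv ⟨z, hzu.2, hzu.1, hzv.1⟩
    · rw [← union_inter_distrib_right, inter_eq_right.2 hcover]

theorem IsPreconnected.inter_frontier_nonempty {N s : Set X} (hN : IsPreconnected N)
    (hNs : (N ∩ s).Nonempty) (hNs' : (N \ s).Nonempty) : (N ∩ frontier s).Nonempty := by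
  by_contra h
  have hcover : N ⊆ interior s ∪ interior sᶜ := fun y hy =>
    compl_frontier_eq_union_interior (s := s) ▸ fun hyf => h ⟨y, hy, hyf⟩
  have hdisj : Disjoint (interior s) (interior sᶜ) :=
    disjoint_compl_right.mono interior_subset interior_subset
  obtain ⟨z, hzN, hzs⟩ := hNs
  obtain ⟨w, hwN, hws⟩ := hNs'
  rcases hN.subset_or_subset isOpen_interior isOpen_interior hdisj hcover with h | h
  · exact hws (interior_subset (h hwN))
  · exact interior_subset (h hzN) hzs

end Separation

section Branch

variable {X : Type*} [TopologicalSpace X]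

def cutComponent (a c : X) : Set X := connectedComponentIn {c}ᶜ a

def branch (a c : X) : Set X := (cutComponent a c)ᶜ

variable {a c d : X}

theorem isPreconnected_cutComponent : IsPreconnected (cutComponent a c) :=
  isPreconnected_connectedComponentIn

theorem cutComponent_subset : cutComponent a c ⊆ {c}ᶜ := connectedComponentIn_subset _ _

theorem mem_cutComponent (hac : a ≠ c) : a ∈ cutComponent a c := mem_connectedComponentIn hac

theorem mem_branch_self : c ∈ branch a c := fun h => cutComponent_subset h rfl

theorem cutComponent_union_branch_diff : cutComponent a c ∪ (branch a c \ {c}) = {c}ᶜ := by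
  ext x
  by_cases hx : x ∈ cutComponent a c
  · simpa [branch, hx] using cutComponent_subset hx
  · simp [branch, hx]

theorem branch_diff_nonempty (hc : CutPoint c) : (branch a c \ {c}).Nonempty := by
  by_contra h
  rw [not_nonempty_iff_eq_empty] at h
  refine isPreconnected_compl_iff_not_cuts.1 ?_ hc
  rw [← cutComponent_union_branch_diff (a := a), h, union_empty]
  exact isPreconnected_cutComponent

theorem connectedComponentIn_subset_branch_diff {y : X} (hy : y ∈ branch a c \ {c}) :
    connectedComponentIn {c}ᶜ y ⊆ branch a c \ {c} := fun z hz =>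
  ⟨fun hzK => hy.1 <| by
    rw [cutComponent, connectedComponentIn_eq hzK, ← connectedComponentIn_eq hz]
    exact mem_connectedComponentIn hy.2,
   connectedComponentIn_subset _ _ hz⟩

theorem branch_subset_branch (hac : a ≠ c) (hd : d ∈ branch a c) : branch a d ⊆ branch a c :=
  compl_subset_compl.2 <| isPreconnected_cutComponent.subset_connectedComponentIn
    (mem_cutComponent hac) fun _ hx hxd => hd (hxd ▸ hx)

variable [T1Space X] [LocallyConnectedSpace X]

theorem isOpen_cutComponent : IsOpen (cutComponent a c) :=
  isOpen_compl_singleton.connectedComponentIn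

theorem isOpen_branch_diff : IsOpen (branch a c \ {c}) :=
  isOpen_iff_forall_mem_open.2 fun _ hy => ⟨_, connectedComponentIn_subset_branch_diff hy,
    isOpen_compl_singleton.connectedComponentIn, mem_connectedComponentIn hy.2⟩

theorem IsPreconnected.subset_cutComponent_or_subset_branch {S : Set X} (hS : IsPreconnected S)
    (hcS : c ∉ S) : S ⊆ cutComponent a c ∨ S ⊆ branch a c \ {c} :=
  hS.subset_or_subset isOpen_cutComponent isOpen_branch_diff
    (disjoint_left.2 fun _ hy hy' => hy'.1 hy)
    fun _ hy => cutComponent_union_branch_diff.ge fun hyc => hcS (eq_of_mem_singleton hyc ▸ hy)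

theorem separates_singleton_iff (hac : a ≠ c) {x : X} :
    Separates {c} {a} {x} ↔ x ∈ branch a c \ {c} := by
  constructor
  · rintro ⟨U, V, hUV, haU, hxV⟩
    obtain ⟨-, -, hdisj, hcover, -, -⟩ := id hUV
    have hKU : cutComponent a c ⊆ U := isPreconnected_cutComponent.subset_of_sepPair
      cutComponent_subset hUV ⟨a, mem_cutComponent hac, haU rfl⟩
    exact ⟨fun hxK => disjoint_left.1 hdisj (hKU hxK) (hxV rfl), hcover.le (Or.inr (hxV rfl))⟩
  · intro hx
    refine ⟨_, _, ⟨⟨_, isOpen_cutComponent, (inter_eq_left.2 cutComponent_subset).symm⟩,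
      ⟨_, isOpen_branch_diff, (inter_eq_left.2 fun _ hy => hy.2).symm⟩,
      disjoint_left.2 fun _ hy hy' => hy'.1 hy, cutComponent_union_branch_diff,
      ⟨a, mem_cutComponent hac⟩, ⟨x, hx⟩⟩, singleton_subset_iff.2 (mem_cutComponent hac),
      singleton_subset_iff.2 hx⟩

variable [ConnectedSpace X]

theorem mem_closure_connectedComponentIn_compl_singleton {x : X} (hxc : x ≠ c) :
    c ∈ closure (connectedComponentIn {c}ᶜ x) := by
  by_contra hc
  have hclosed : IsClosed (connectedComponentIn {c}ᶜ x) := by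
    refine closure_subset_iff_isClosed.1 fun z hz => ?_
    have hzc : z ≠ c := fun h => hc (h ▸ hz)
    obtain ⟨w, hwz, hwx⟩ := mem_closure_iff.1 hz _
      isOpen_compl_singleton.connectedComponentIn (mem_connectedComponentIn hzc)
    rw [connectedComponentIn_eq hwx, ← connectedComponentIn_eq hwz]
    exact mem_connectedComponentIn hzc
  have huniv := IsClopen.eq_univ ⟨hclosed, isOpen_compl_singleton.connectedComponentIn⟩
    ⟨x, mem_connectedComponentIn hxc⟩
  exact connectedComponentIn_subset {c}ᶜ x (huniv ▸ mem_univ c) rfl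

theorem notMem_interior_branch (hac : a ≠ c) : c ∉ interior (branch a c) := by
  rw [branch, interior_compl]
  exact not_not.2 (mem_closure_connectedComponentIn_compl_singleton hac)

theorem isPreconnected_branch : IsPreconnected (branch a c) := by
  refine isPreconnected_of_forall c fun y hy => ?_
  by_cases hyc : y = c
  · exact ⟨{c}, singleton_subset_iff.2 mem_branch_self, rfl, hyc, isPreconnected_singleton⟩
  refine ⟨insert c (connectedComponentIn {c}ᶜ y), insert_subset mem_branch_self fun z hz =>
    (connectedComponentIn_subset_branch_diff ⟨hy, hyc⟩ hz).1, mem_insert _ _,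
    mem_insert_of_mem _ (mem_connectedComponentIn hyc), ?_⟩
  exact isPreconnected_connectedComponentIn.subset_closure (subset_insert _ _)
    (insert_subset (mem_closure_connectedComponentIn_compl_singleton hyc) subset_closure)

theorem branch_subset_or_subset (hac : a ≠ c) (had : a ≠ d)
    (h : (branch a c ∩ branch a d).Nonempty) :
    branch a c ⊆ branch a d ∨ branch a d ⊆ branch a c := by
  by_cases hdc : d ∈ branch a c
  · exact Or.inr (branch_subset_branch hac hdc)
  by_cases hcd : c ∈ branch a d
  · exact Or.inl (branch_subset_branch had hcd)
  obtain ⟨z, hzc, hzd⟩ := h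
  rcases isPreconnected_branch.subset_cutComponent_or_subset_branch hcd with h | h
  · exact absurd (h hzd) hzc
  · exact Or.inr fun w hw => (h hw).1

theorem branch_diff_subset_or_subset (hac : a ≠ c) (had : a ≠ d)
    (h : ((branch a c \ {c}) ∩ (branch a d \ {d})).Nonempty) :
    branch a c \ {c} ⊆ branch a d \ {d} ∨ branch a d \ {d} ⊆ branch a c \ {c} := by
  have hmono : ∀ {c d : X}, a ≠ d → branch a c ⊆ branch a d →
      branch a c \ {c} ⊆ branch a d \ {d} := fun had hcd w hw =>
    ⟨hcd hw.1, fun hwd => notMem_interior_branch had <| mem_interior.2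
      ⟨_, sdiff_subset.trans hcd, isOpen_branch_diff, (eq_of_mem_singleton hwd) ▸ hw⟩⟩
  rcases branch_subset_or_subset hac had (h.mono (inter_subset_inter sdiff_subset sdiff_subset))
    with h | h
  exacts [Or.inl (hmono had h), Or.inr (hmono hac h)]

end Branch

section Unseparated

variable {X : Type*} [TopologicalSpace X]

/-- The points of `X` that no cut point separates from `a`. -/
def unseparated (a : X) : Set X := {x | ∀ c, CutPoint c → x ∉ branch a c \ {c}}

def cluster (a x : X) : Set X :=
  {y | ∃ c, CutPoint c ∧ x ∈ branch a c \ {c} ∧ y ∈ branch a c \ {c}}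

/-- The unique frontier point of `cluster a x` when `x ∉ unseparated a`. -/
noncomputable def attachPoint (a x : X) : X :=
  @Classical.epsilon X ⟨x⟩ (· ∈ frontier (cluster a x))

open scoped Classical in
noncomputable def retractUnseparated (a x : X) : X :=
  if x ∈ unseparated a then x else attachPoint a x

variable {a b x y : X}

theorem mem_unseparated_self (ha : ¬CutPoint a) : a ∈ unseparated a :=
  fun _ hc h => h.1 (mem_cutComponent (ne_of_not_cutPoint ha hc))

theorem mem_cutComponent_of_mem_unseparated {c : X} (hc : CutPoint c) (hx : x ∈ unseparated a)
    (hxc : x ≠ c) : x ∈ cutComponent a c :=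
  by_contra fun hxK => hx c hc ⟨hxK, hxc⟩

theorem mem_cluster_self (hx : x ∉ unseparated a) : x ∈ cluster a x := by
  simp only [unseparated, mem_ofPred_eq, not_forall, not_not] at hx
  obtain ⟨c, hc, hxc⟩ := hx
  exact ⟨c, hc, hxc, hxc⟩

theorem notMem_unseparated_of_mem_cluster (hy : y ∈ cluster a x) : y ∉ unseparated a :=
  fun hyB => let ⟨c, hc, _, hyc⟩ := hy; hyB c hc hyc

theorem mem_cluster_comm : y ∈ cluster a x ↔ x ∈ cluster a y :=
  exists_congr fun _ => and_congr_right' and_comm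

theorem retractUnseparated_of_mem (hx : x ∈ unseparated a) : retractUnseparated a x = x :=
  if_pos hx

variable [T1Space X] [LocallyConnectedSpace X]

theorem isClosed_unseparated : IsClosed (unseparated a) := by
  simp only [unseparated, ofPred_forall]
  exact isClosed_iInter fun _ => isClosed_iInter fun _ => isOpen_branch_diff.isClosed_compl

theorem isOpen_cluster : IsOpen (cluster a x) :=
  isOpen_iff_forall_mem_open.2 fun _ ⟨c, hc, hxc, hyc⟩ =>
    ⟨_, fun _ hz => ⟨c, hc, hxc, hz⟩, isOpen_branch_diff, hyc⟩

theorem notMem_cluster_of_mem_frontier {g : X} (hg : g ∈ frontier (cluster a x)) :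
    g ∉ cluster a x :=
  disjoint_left.1 (disjoint_frontier_iff_isOpen.2 isOpen_cluster) hg

theorem subset_cutComponent_of_mem_frontier_cluster {g d : X} {N : Set X}
    (hg : g ∈ frontier (cluster a x)) (hN : IsPreconnected N) (hgN : g ∈ N)
    (hd : CutPoint d) (hxd : x ∈ branch a d \ {d}) (hdN : d ∉ N) : N ⊆ cutComponent a d :=
  (hN.subset_cutComponent_or_subset_branch hdN).resolve_right fun h =>
    notMem_cluster_of_mem_frontier hg ⟨d, hd, hxd, h hgN⟩

theorem exists_cutPoint_mem_of_mem_frontier_cluster {g : X} {N : Set X}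
    (hg : g ∈ frontier (cluster a x)) (hNo : IsOpen N) (hN : IsPreconnected N) (hgN : g ∈ N) :
    ∃ c, CutPoint c ∧ x ∈ branch a c \ {c} ∧ c ∈ N := by
  obtain ⟨z, hzN, c, hc, hxc, hzc⟩ := mem_closure_iff.1 (frontier_subset_closure hg) N hNo hgN
  exact ⟨c, hc, hxc, by_contra fun hcN =>
    hzc.1 (subset_cutComponent_of_mem_frontier_cluster hg hN hgN hc hxc hcN hzN)⟩

variable [ConnectedSpace X] (ha : ¬CutPoint a)
include ha

theorem mem_cluster_trans {z : X} (hxy : y ∈ cluster a x) (hyz : z ∈ cluster a y) :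
    z ∈ cluster a x := by
  obtain ⟨c, hc, hxc, hyc⟩ := hxy
  obtain ⟨d, hd, hyd, hzd⟩ := hyz
  rcases branch_diff_subset_or_subset (ne_of_not_cutPoint ha hc) (ne_of_not_cutPoint ha hd)
    ⟨y, hyc, hyd⟩ with h | h
  exacts [⟨d, hd, h hxc, hzd⟩, ⟨c, hc, hxc, h hzd⟩]

theorem cluster_eq_of_mem (hy : y ∈ cluster a x) : cluster a y = cluster a x :=
  ext fun _ => ⟨mem_cluster_trans ha hy, mem_cluster_trans ha (mem_cluster_comm.1 hy)⟩

theorem attachPoint_eq_of_mem_cluster (hy : y ∈ cluster a x) :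
    attachPoint a y = attachPoint a x := by
  rw [attachPoint, attachPoint, cluster_eq_of_mem ha hy]

variable [T2Space X]

theorem frontier_cluster_subsingleton : (frontier (cluster a x)).Subsingleton := by
  intro g hg g' hg'
  by_contra hne
  obtain ⟨U, U', hU, hU', hgU, hgU', hUU'⟩ := t2_separation hne
  obtain ⟨N, ⟨hNo, hgN, hN⟩, hNU⟩ :=
    (LocallyConnectedSpace.open_connected_basis g).mem_iff.1 (hU.mem_nhds hgU)
  obtain ⟨N', ⟨hNo', hgN', hN'⟩, hNU'⟩ :=
    (LocallyConnectedSpace.open_connected_basis g').mem_iff.1 (hU'.mem_nhds hgU')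
  obtain ⟨c, hc, hxc, hcN⟩ :=
    exists_cutPoint_mem_of_mem_frontier_cluster hg hNo hN.isPreconnected hgN
  obtain ⟨d, hd, hxd, hdN'⟩ :=
    exists_cutPoint_mem_of_mem_frontier_cluster hg' hNo' hN'.isPreconnected hgN'
  have hdN : d ∉ N := fun h => disjoint_left.1 hUU' (hNU h) (hNU' hdN')
  have hcN' : c ∉ N' := fun h => disjoint_left.1 hUU' (hNU hcN) (hNU' h)
  rcases branch_subset_or_subset (ne_of_not_cutPoint ha hc) (ne_of_not_cutPoint ha hd)
    ⟨x, hxc.1, hxd.1⟩ with h | h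
  · exact h mem_branch_self <|
      subset_cutComponent_of_mem_frontier_cluster hg hN.isPreconnected hgN hd hxd hdN hcN
  · exact h mem_branch_self <|
      subset_cutComponent_of_mem_frontier_cluster hg' hN'.isPreconnected hgN' hc hxc hcN' hdN'

theorem frontier_cluster_eq (hx : x ∉ unseparated a) :
    frontier (cluster a x) = {attachPoint a x} := by
  have hne : (frontier (cluster a x)).Nonempty := nonempty_frontier_iff.2
    ⟨⟨x, mem_cluster_self hx⟩, fun h => notMem_unseparated_of_mem_cluster
      (h ▸ mem_univ a) (mem_unseparated_self ha)⟩
  exact (frontier_cluster_subsingleton ha).eq_singleton_of_mem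
    (by exact Classical.epsilon_spec hne)

theorem attachPoint_mem_unseparated (hx : x ∉ unseparated a) :
    attachPoint a x ∈ unseparated a := by
  intro d hd hgd
  have hg : attachPoint a x ∈ frontier (cluster a x) := by
    rw [frontier_cluster_eq ha hx]; rfl
  obtain ⟨z, hzd, c, hc, hxc, hzc⟩ :=
    mem_closure_iff.1 (frontier_subset_closure hg) _ isOpen_branch_diff hgd
  refine notMem_cluster_of_mem_frontier hg ?_
  rcases branch_diff_subset_or_subset (ne_of_not_cutPoint ha hc) (ne_of_not_cutPoint ha hd)
    ⟨z, hzc, hzd⟩ with h | h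
  exacts [⟨d, hd, h hxc, hgd⟩, ⟨c, hc, hxc, h hgd⟩]

theorem attachPoint_mem_of_isPreconnected {N : Set X} (hx : x ∉ unseparated a)
    (hN : IsPreconnected N) (hxN : x ∈ N) (hbN : b ∈ N) (hb : b ∈ unseparated a) :
    attachPoint a x ∈ N := by
  obtain ⟨g, hgN, hg⟩ := hN.inter_frontier_nonempty ⟨x, hxN, mem_cluster_self hx⟩
    ⟨b, hbN, fun h => notMem_unseparated_of_mem_cluster h hb⟩
  rw [frontier_cluster_eq ha hx] at hg
  exact hg ▸ hgN

theorem retractUnseparated_mem (x : X) : retractUnseparated a x ∈ unseparated a := by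
  unfold retractUnseparated
  split_ifs with hx
  exacts [hx, attachPoint_mem_unseparated ha hx]

theorem retractUnseparated_mem_of_isPreconnected {N : Set X} (hN : IsPreconnected N)
    (hbN : b ∈ N) (hb : b ∈ unseparated a) (hyN : y ∈ N) : retractUnseparated a y ∈ N := by
  unfold retractUnseparated
  split_ifs with hy
  exacts [hyN, attachPoint_mem_of_isPreconnected ha hy hN hyN hbN hb]

theorem continuous_retractUnseparated : Continuous (retractUnseparated a) := by
  refine continuous_iff_continuousAt.2 fun x => ?_
  by_cases hx : x ∈ unseparated a
  · rw [ContinuousAt, retractUnseparated_of_mem hx,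
      (LocallyConnectedSpace.open_connected_basis x).tendsto_right_iff]
    exact fun N ⟨hNo, hxN, hN⟩ => Filter.mem_of_superset (hNo.mem_nhds hxN) fun y hy =>
      retractUnseparated_mem_of_isPreconnected ha hN.isPreconnected hxN hx hy
  · refine (continuousAt_const : ContinuousAt (fun _ => attachPoint a x) x).congr ?_
    filter_upwards [isOpen_cluster.mem_nhds (mem_cluster_self hx)] with y hy
    rw [retractUnseparated, if_neg (notMem_unseparated_of_mem_cluster hy),
      attachPoint_eq_of_mem_cluster ha hy]

theorem IsPreconnected.inter_unseparated {N : Set X} (hN : IsPreconnected N) :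
    IsPreconnected (N ∩ unseparated a) := by
  rcases (N ∩ unseparated a).eq_empty_or_nonempty with h | ⟨b, hbN, hb⟩
  · exact h ▸ isPreconnected_empty
  have himage : retractUnseparated a '' N = N ∩ unseparated a := by
    refine Subset.antisymm ?_ fun y hy => ⟨y, hy.1, retractUnseparated_of_mem hy.2⟩
    rintro _ ⟨y, hy, rfl⟩
    exact ⟨retractUnseparated_mem_of_isPreconnected ha hN hbN hb hy, retractUnseparated_mem ha y⟩
  exact himage ▸ hN.image _ (continuous_retractUnseparated ha).continuousOn

theorem isPreconnected_unseparated : IsPreconnected (unseparated a) := by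
  simpa using isPreconnected_univ.inter_unseparated ha

theorem locallyConnectedSpace_unseparated : LocallyConnectedSpace (unseparated a) :=
  (IsQuotientMap.of_inverse continuous_subtype_val
    ((continuous_retractUnseparated ha).codRestrict (retractUnseparated_mem ha))
    fun b => Subtype.ext (retractUnseparated_of_mem b.2)).isCoinducing.locallyConnectedSpace

theorem isPreconnected_unseparated_diff_singleton (e : X) :
    IsPreconnected (unseparated a \ {e}) := by
  by_cases he : CutPoint e
  · have hdiff : unseparated a \ {e} = cutComponent a e ∩ unseparated a :=
      ext fun x => ⟨fun hx => ⟨mem_cutComponent_of_mem_unseparated he hx.1 hx.2, hx.1⟩,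
        fun hx => ⟨hx.2, cutComponent_subset hx.1⟩⟩
    exact hdiff ▸ isPreconnected_cutComponent.inter_unseparated ha
  · rw [sdiff_eq_compl_inter]
    exact (isPreconnected_compl_iff_not_cuts.2 he).inter_unseparated ha

theorem not_cutPoint_unseparated (e : unseparated a) : ¬CutPoint e := by
  rw [CutPoint, ← isPreconnected_compl_iff_not_cuts,
    ← Topology.IsInducing.subtypeVal.isPreconnected_image, image_val_compl, image_singleton]
  exact isPreconnected_unseparated_diff_singleton ha e

end Unseparated

theorem countable_setOf_cutPoint_mem_unseparated {X : Type*} [TopologicalSpace X] [T1Space X]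
    [LocallyConnectedSpace X] [ConnectedSpace X] [TopologicalSpace.SeparableSpace X] {a : X}
    (ha : ¬CutPoint a) : {c | CutPoint c ∧ c ∈ unseparated a}.Countable := by
  refine PairwiseDisjoint.countable_of_isOpen (s := fun c => branch a c \ {c})
    (fun c hc d hd hcd => disjoint_left.2 fun w hwc hwd => ?_)
    (fun _ _ => isOpen_branch_diff) fun c hc => branch_diff_nonempty hc.1
  rcases branch_subset_or_subset (ne_of_not_cutPoint ha hc.1) (ne_of_not_cutPoint ha hd.1)
    ⟨w, hwc.1, hwd.1⟩ with h | h
  · exact hc.2 d hd.1 ⟨h mem_branch_self, hcd⟩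
  · exact hd.2 c hc.1 ⟨h mem_branch_self, hcd.symm⟩

theorem unseparated_subset_closure_setOf_not_cutPoint {X : Type*} [MetricSpace X]
    [LocallyConnectedSpace X] [ConnectedSpace X] [TopologicalSpace.SeparableSpace X] {a : X}
    (ha : ¬CutPoint a) (hB : (unseparated a).Nontrivial) :
    unseparated a ⊆ closure {x ∈ unseparated a | ¬CutPoint x} := by
  intro b hb
  refine mem_closure_iff_nhds.2 fun U hU => ?_
  obtain ⟨N, ⟨hNo, hbN, hN⟩, hNU⟩ := (LocallyConnectedSpace.open_connected_basis b).mem_iff.1 hU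
  obtain ⟨b', ⟨hb'N, hb'⟩, hb'b⟩ := accPt_iff_nhds.1
    ((isPreconnected_unseparated ha).preperfect_of_nontrivial hB b hb) N (hNo.mem_nhds hbN)
  have huncount : ¬(N ∩ unseparated a).Countable := fun h => hb'b <|
    h.isTotallyDisconnected _ subset_rfl (hN.isPreconnected.inter_unseparated ha)
      ⟨hb'N, hb'⟩ ⟨hbN, hb⟩
  obtain ⟨y, ⟨hyN, hy⟩, hyc⟩ : ∃ y ∈ N ∩ unseparated a, ¬CutPoint y := by
    by_contra! h
    exact huncount <| (countable_setOf_cutPoint_mem_unseparated ha).mono fun y hy =>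
      mem_ofPred.2 ⟨h y hy, hy.2⟩
  exact ⟨y, hNU hyN, hy, hyc⟩

theorem setOf_not_separated_eq {X : Type*} [TopologicalSpace X] [T1Space X]
    [LocallyConnectedSpace X] {a : X} (ha : ¬CutPoint a) :
    {b : X | b = a ∨ (¬CutPoint b ∧ ∀ c : X, CutPoint c → ¬Separates ({c} : Set X) {a} {b})} =
      {x ∈ unseparated a | ¬CutPoint x} := by
  ext b
  constructor
  · rintro (rfl | ⟨hb, hsep⟩)
    · exact ⟨mem_unseparated_self ha, ha⟩
    · exact ⟨fun c hc h => hsep c hc ((separates_singleton_iff (ne_of_not_cutPoint ha hc)).2 h), hb⟩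
  · rintro ⟨hB, hb⟩
    exact Or.inr ⟨hb, fun c hc h =>
      hB c hc ((separates_singleton_iff (ne_of_not_cutPoint ha hc)).1 h)⟩

/-- the closure of a nonsingleton cut-point equivalence class of a
Peano continuum is a Peano continuum without cut points. -/
theorem stmt15 {X : Type*} [MetricSpace X] [CompactSpace X] [ConnectedSpace X]
    [LocallyConnectedSpace X]
    (a : X) (ha : ¬CutPoint a) (A : Set X)
    (hA : A = {b : X | b = a ∨ (¬CutPoint b ∧
      ∀ c : X, CutPoint c → ¬Separates ({c} : Set X) {a} {b})})
    (hnt : A.Nontrivial) :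
    CompactSpace ↥(closure A) ∧ ConnectedSpace ↥(closure A) ∧
    LocallyConnectedSpace ↥(closure A) ∧
    ∀ e : ↥(closure A), ¬CutPoint e := by
  rw [setOf_not_separated_eq ha] at hA
  subst hA
  have hclosure : closure {x ∈ unseparated a | ¬CutPoint x} = unseparated a :=
    (closure_minimal (sep_subset _ _) isClosed_unseparated).antisymm
      (unseparated_subset_closure_setOf_not_cutPoint ha (hnt.mono (sep_subset _ _)))
  rw [hclosure]
  exact ⟨isCompact_iff_compactSpace.1 isClosed_unseparated.isCompact,
    Subtype.connectedSpace ⟨⟨a, mem_unseparated_self ha⟩, isPreconnected_unseparated ha⟩,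
    locallyConnectedSpace_unseparated ha, not_cutPoint_unseparated ha⟩
end

section
/- Let G be a finitely generated group acting by homeomorphisms on an R-tree T with a non-nesting action. If every element of G is elliptic, then G has a global fixed point in T. -/
open Set

section TreeDefs

/-- `A` is an arc from `a` to `b`: a homeomorphic image of `[0,1]` with endpoints `a,b`. -/
def ArcFrom {T : Type*} [TopologicalSpace T] (a b : T) (A : Set T) : Prop :=
  ∃ f : ℝ → T, ContinuousOn f (Set.Icc 0 1) ∧ Set.InjOn f (Set.Icc 0 1) ∧
    f 0 = a ∧ f 1 = b ∧ f '' Set.Icc 0 1 = A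

/-- `T` is uniquely arcwise connected: any two distinct points are joined by a
unique arc. Together with metrizability this is the definition of an `ℝ`-tree. -/
def IsRTree (T : Type*) [TopologicalSpace T] : Prop :=
  ∀ a b : T, a ≠ b →
    (∃ A : Set T, ArcFrom a b A) ∧
    ∀ A A' : Set T, ArcFrom a b A → ArcFrom a b A' → A = A'

/-- The action is non-nesting: no group element maps a closed arc properly into itself. -/
def NonNesting (G T : Type*) [TopologicalSpace T] [Group G] [MulAction G T] : Prop :=
  ∀ (g : G) (a b : T) (A : Set T), ArcFrom a b A → ¬((fun x => g • x) '' A ⊂ A)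

/-- A ray: a subspace homeomorphic to `[0,∞)`. -/
def IsRay {T : Type*} [TopologicalSpace T] (R : Set T) : Prop :=
  Nonempty (↥R ≃ₜ ↥(Set.Ici (0 : ℝ)))

end TreeDefs

/-!
Fixed-point sets are closed and arc-convex: if `g` fixes both ends of an arc it maps the arc
onto itself, and a point it moved would let `g` or `g⁻¹` nest a subarc starting at a fixed end.

Serre's lemma: let `g`, `h` and `gh` be elliptic and `gh • w = w`. The first points `β` of
`Fix h` and `α` of `Fix g` on arcs leaving `w` both lie on the arc `[w, h • w] = [w, g⁻¹ • w]`,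
because `[w, β] ∪ h • [w, β]` is an arc by non-nesting. If `α ∈ [w, β]`, then `g • β ∈ [w, α]`, so
`gh` maps `[w, β]` onto `[w, g • β] ⊆ [w, β]` and non-nesting forces `g • β = β`; symmetrically
with `(gh)⁻¹` if `β ∈ [w, α]`.

Hence the fixed-point sets of a finite generating set pairwise intersect, and closed arc-convex
sets of an ℝ-tree that pairwise intersect have a common point (Helly): the first point `q` of `A`
on an arc from `x ∈ ⋂ 𝒮` is the median of `x`, `q` and any `y ∈ A ∩ F`, so it lies in `[x, y] ⊆ F`.
-/

open Function MulAction

section Arcs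

variable {T : Type*} [TopologicalSpace T] {a b c : T} {A B : Set T}

theorem ArcFrom.ne (h : ArcFrom a b A) : a ≠ b := by
  obtain ⟨f, -, hi, rfl, rfl, -⟩ := h
  exact fun h01 => zero_ne_one (hi (left_mem_Icc.2 zero_le_one) (right_mem_Icc.2 zero_le_one) h01)

theorem ArcFrom.left_mem (h : ArcFrom a b A) : a ∈ A := by
  obtain ⟨f, -, -, rfl, -, rfl⟩ := h
  exact mem_image_of_mem f (left_mem_Icc.2 zero_le_one)

theorem ArcFrom.isCompact (h : ArcFrom a b A) : IsCompact A := by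
  obtain ⟨f, hc, -, -, -, rfl⟩ := h
  exact isCompact_Icc.image_of_continuousOn hc

theorem ArcFrom.image {U : Type*} [TopologicalSpace U] (h : ArcFrom a b A) {φ : T → U}
    (hφ : Continuous φ) (hinj : Injective φ) : ArcFrom (φ a) (φ b) (φ '' A) := by
  obtain ⟨f, hc, hi, rfl, rfl, rfl⟩ := h
  exact ⟨φ ∘ f, hφ.comp_continuousOn hc, hinj.comp_injOn hi, rfl, rfl, image_comp φ f _⟩

theorem arcFrom_image_uIcc {f : ℝ → T} {s t : ℝ} (hst : s ≠ t) (hc : ContinuousOn f (uIcc s t))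
    (hi : InjOn f (uIcc s t)) : ArcFrom (f s) (f t) (f '' uIcc s t) := by
  have himg : AffineMap.lineMap s t '' Icc (0 : ℝ) 1 = uIcc s t := by
    rw [← segment_eq_image_lineMap, segment_eq_uIcc]
  have hmaps : MapsTo (AffineMap.lineMap s t) (Icc (0 : ℝ) 1) (uIcc s t) :=
    himg ▸ mapsTo_image _ _
  exact ⟨f ∘ AffineMap.lineMap s t, hc.comp AffineMap.lineMap_continuous.continuousOn hmaps,
    hi.comp (AffineMap.lineMap_injective ℝ hst).injOn hmaps, by simp, by simp,
    by rw [image_comp, himg]⟩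

theorem ArcFrom.symm (h : ArcFrom a b A) : ArcFrom b a A := by
  obtain ⟨f, hc, hi, rfl, rfl, rfl⟩ := h
  have h10 : uIcc (1 : ℝ) 0 = Icc 0 1 := uIcc_of_ge zero_le_one
  rw [← h10] at hc hi ⊢
  exact arcFrom_image_uIcc one_ne_zero hc hi

theorem ArcFrom.exists_continuous (h : ArcFrom a b A) :
    ∃ f : ℝ → T, Continuous f ∧ InjOn f (Icc 0 1) ∧ f 0 = a ∧ f 1 = b ∧ f '' Icc 0 1 = A := by
  obtain ⟨f, hc, hi, rfl, rfl, rfl⟩ := h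
  have heq : EqOn f (fun t => f (projIcc (0 : ℝ) 1 zero_le_one t)) (Icc 0 1) := fun t ht => by
    simp [projIcc_of_mem _ ht]
  exact ⟨_, hc.comp_continuous (continuous_subtype_val.comp continuous_projIcc)
    fun t => (projIcc _ _ _ t).2, hi.congr heq, by simp, by simp, heq.image_eq.symm⟩

theorem ArcFrom.union (hA : ArcFrom a b A) (hB : ArcFrom b c B) (hAB : A ∩ B ⊆ {b}) :
    ArcFrom a c (A ∪ B) := by
  obtain ⟨f, hf, hfi, rfl, rfl, rfl⟩ := hA.exists_continuous
  obtain ⟨g, hg, hgi, hg0, rfl, rfl⟩ := hB.exists_continuous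
  set γ : ℝ → T := fun t => if t ≤ 1 then f t else g (t - 1) with hγ
  have hγc : Continuous γ :=
    Continuous.if_le hf (hg.comp (continuous_sub_right 1)) continuous_id continuous_const
      fun t ht => by simp [show t = 1 from ht, hg0]
  have h₁ : EqOn γ f (Icc 0 1) := fun t ht => if_pos ht.2
  have h₂ : EqOn γ (g ∘ fun t => t - 1) (Icc 1 2) := by
    intro t ht
    rcases ht.1.eq_or_lt with rfl | h
    · simp [hγ, hg0]
    · simp [hγ, not_le.2 h]
  have hu : uIcc (0 : ℝ) 2 = Icc 0 2 := uIcc_of_le zero_le_two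
  have himage : γ '' Icc 0 2 = f '' Icc 0 1 ∪ g '' Icc 0 1 := by
    rw [← Icc_union_Icc_eq_Icc zero_le_one one_le_two, image_union, h₁.image_eq, h₂.image_eq,
      image_comp, image_sub_const_Icc]
    norm_num
  have hinj : InjOn γ (Icc 0 2) := by
    intro s hs t ht hst
    wlog hle : s ≤ t generalizing s t
    · exact (this ht hs hst.symm (le_of_not_ge hle)).symm
    rcases le_or_gt t 1 with ht1 | ht1
    · exact hfi ⟨hs.1, hle.trans ht1⟩ ⟨ht.1, ht1⟩ (by simpa [hγ, hle.trans ht1, ht1] using hst)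
    have hγt : γ t = g (t - 1) := if_neg (not_le.2 ht1)
    rcases le_or_gt s 1 with hs1 | hs1
    · -- `γ s ∈ A` and `γ t ∈ B`, so both are `b = g 0`, which forces `t = 1`.
      have hb : γ t ∈ f '' Icc 0 1 ∩ g '' Icc 0 1 :=
        ⟨hst ▸ h₁ ⟨hs.1, hs1⟩ ▸ mem_image_of_mem f ⟨hs.1, hs1⟩,
          hγt ▸ mem_image_of_mem g ⟨by linarith, by linarith [ht.2]⟩⟩
      have := hgi ⟨by linarith, by linarith [ht.2]⟩ (left_mem_Icc.2 zero_le_one)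
        ((hγt ▸ hAB hb).trans hg0.symm)
      linarith
    · have := hgi (show s - 1 ∈ Icc (0 : ℝ) 1 from ⟨by linarith, by linarith [hs.2]⟩)
        (show t - 1 ∈ Icc (0 : ℝ) 1 from ⟨by linarith, by linarith [ht.2]⟩)
        (by simpa [hγ, not_le.2 hs1, not_le.2 ht1] using hst)
      linarith
  have harc := arcFrom_image_uIcc two_ne_zero.symm hγc.continuousOn (hu ▸ hinj)
  rwa [hu, himage, show γ 0 = f 0 by simp [hγ], show γ 2 = g 1 by norm_num [hγ]] at harc

end Arcs

section Segments

variable {T : Type*} [TopologicalSpace T] {a b c x y z : T} {A : Set T}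

/-- In an ℝ-tree, the unique arc from `a` to `b`, and `{a}` when `a = b`. -/
def seg (a b : T) : Set T := insert a (⋃₀ {A | ArcFrom a b A})

def IsArcConvex (C : Set T) : Prop := ∀ a ∈ C, ∀ b ∈ C, seg a b ⊆ C

theorem left_mem_seg (a b : T) : a ∈ seg a b := mem_insert a _

theorem seg_self (a : T) : seg a a = {a} := by
  have : {A : Set T | ArcFrom a a A} = ∅ := eq_empty_of_forall_notMem fun _ h => h.ne rfl
  simp [seg, this]

namespace IsRTree

theorem seg_eq (hRT : IsRTree T) (h : ArcFrom a b A) : seg a b = A := by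
  have : {A' | ArcFrom a b A'} = {A} :=
    eq_singleton_iff_unique_mem.2 ⟨h, fun _ h' => (hRT a b h.ne).2 _ _ h' h⟩
  rw [seg, this, sUnion_singleton, insert_eq_of_mem h.left_mem]

theorem arcFrom_seg (hRT : IsRTree T) (hab : a ≠ b) : ArcFrom a b (seg a b) := by
  obtain ⟨A, hA⟩ := (hRT a b hab).1
  rwa [hRT.seg_eq hA]

theorem seg_comm (hRT : IsRTree T) (a b : T) : seg a b = seg b a := by
  rcases eq_or_ne a b with rfl | hab
  · rfl
  · exact hRT.seg_eq (hRT.arcFrom_seg hab.symm).symm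

theorem right_mem_seg (hRT : IsRTree T) (a b : T) : b ∈ seg a b :=
  hRT.seg_comm b a ▸ left_mem_seg b a

theorem isClosed_seg [T2Space T] (hRT : IsRTree T) (a b : T) : IsClosed (seg a b) := by
  rcases eq_or_ne a b with rfl | hab
  · rw [seg_self]
    exact isClosed_singleton
  · exact (hRT.arcFrom_seg hab).isCompact.isClosed

theorem image_seg (hRT : IsRTree T) {φ : T → T} (hφ : Continuous φ) (hinj : Injective φ)
    (a b : T) : φ '' seg a b = seg (φ a) (φ b) := by
  rcases eq_or_ne a b with rfl | hab
  · simp [seg_self]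
  · exact (hRT.seg_eq ((hRT.arcFrom_seg hab).image hφ hinj)).symm

theorem seg_eq_image_uIcc (hRT : IsRTree T) {f : ℝ → T} (hc : ContinuousOn f (Icc 0 1))
    (hi : InjOn f (Icc 0 1)) {s t : ℝ} (hs : s ∈ Icc (0 : ℝ) 1) (ht : t ∈ Icc (0 : ℝ) 1) :
    seg (f s) (f t) = f '' uIcc s t := by
  rcases eq_or_ne s t with rfl | hst
  · simp [seg_self]
  · have hsub := uIcc_subset_Icc hs ht
    exact hRT.seg_eq (arcFrom_image_uIcc hst (hc.mono hsub) (hi.mono hsub))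

theorem seg_union_seg_of_mem (hRT : IsRTree T) (hy : y ∈ seg a b) :
    seg a y ∪ seg y b = seg a b := by
  rcases eq_or_ne a b with rfl | hab
  · rw [seg_self] at hy
    rw [hy, seg_self, union_self]
  obtain ⟨f, hc, hi, rfl, rfl, hf⟩ := hRT.arcFrom_seg hab
  rw [← hf] at hy ⊢
  obtain ⟨t, ht, rfl⟩ := hy
  rw [hRT.seg_eq_image_uIcc hc hi (left_mem_Icc.2 zero_le_one) ht,
    hRT.seg_eq_image_uIcc hc hi ht (right_mem_Icc.2 zero_le_one), uIcc_of_le ht.1,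
    uIcc_of_le ht.2, ← image_union, Icc_union_Icc_eq_Icc ht.1 ht.2]

theorem seg_inter_seg_of_mem (hRT : IsRTree T) (hy : y ∈ seg a b) :
    seg a y ∩ seg y b = {y} := by
  rcases eq_or_ne a b with rfl | hab
  · rw [seg_self] at hy
    rw [hy, seg_self, inter_self]
  obtain ⟨f, hc, hi, rfl, rfl, hf⟩ := hRT.arcFrom_seg hab
  rw [← hf] at hy
  obtain ⟨t, ht, rfl⟩ := hy
  rw [hRT.seg_eq_image_uIcc hc hi (left_mem_Icc.2 zero_le_one) ht,
    hRT.seg_eq_image_uIcc hc hi ht (right_mem_Icc.2 zero_le_one), uIcc_of_le ht.1,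
    uIcc_of_le ht.2, ← hi.image_inter (Icc_subset_Icc_right ht.2) (Icc_subset_Icc_left ht.1),
    Icc_inter_Icc_eq_singleton ht.1 ht.2, image_singleton]

theorem mem_seg_or_mem_seg (hRT : IsRTree T) (hy : y ∈ seg a b) (hz : z ∈ seg a b) :
    y ∈ seg a z ∨ z ∈ seg a y := by
  rcases eq_or_ne a b with rfl | hab
  · rw [seg_self] at hy hz
    rw [hy, hz]
    exact Or.inl (left_mem_seg a a)
  obtain ⟨f, hc, hi, rfl, rfl, hf⟩ := hRT.arcFrom_seg hab
  rw [← hf] at hy hz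
  obtain ⟨s, hs, rfl⟩ := hy
  obtain ⟨t, ht, rfl⟩ := hz
  have h0 : (0 : ℝ) ∈ Icc 0 1 := left_mem_Icc.2 zero_le_one
  rw [hRT.seg_eq_image_uIcc hc hi h0 ht, hRT.seg_eq_image_uIcc hc hi h0 hs, uIcc_of_le ht.1,
    uIcc_of_le hs.1]
  rcases le_total s t with hst | hts
  · exact Or.inl (mem_image_of_mem f ⟨hs.1, hst⟩)
  · exact Or.inr (mem_image_of_mem f ⟨ht.1, hts⟩)

theorem exists_first_mem_seg (hRT : IsRTree T) {C : Set T} (hC : IsClosed C) (hb : b ∈ C) :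
    ∃ p ∈ C, p ∈ seg a b ∧ seg a p ∩ C ⊆ {p} := by
  rcases eq_or_ne a b with rfl | hab
  · exact ⟨a, hb, left_mem_seg a a, seg_self a ▸ inter_subset_left⟩
  obtain ⟨f, hc, hi, rfl, rfl, hf⟩ := hRT.arcFrom_seg hab
  set S := Icc (0 : ℝ) 1 ∩ f ⁻¹' C
  have hbdd : BddBelow S := ⟨0, fun _ ht => ht.1.1⟩
  have hsS : sInf S ∈ S := (hc.preimage_isClosed_of_isClosed isClosed_Icc hC).csInf_mem
    ⟨1, right_mem_Icc.2 zero_le_one, hb⟩ hbdd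
  refine ⟨f (sInf S), hsS.2, hf ▸ mem_image_of_mem f hsS.1, ?_⟩
  rw [hRT.seg_eq_image_uIcc hc hi (left_mem_Icc.2 zero_le_one) hsS.1, uIcc_of_le hsS.1.1]
  rintro _ ⟨⟨t, ht, rfl⟩, htC⟩
  rw [le_antisymm ht.2 (csInf_le hbdd ⟨⟨ht.1, ht.2.trans hsS.1.2⟩, htC⟩)]
  rfl

theorem seg_subset_of_mem (hRT : IsRTree T) (hy : y ∈ seg a b) : seg a y ⊆ seg a b :=
  hRT.seg_union_seg_of_mem hy ▸ subset_union_left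

theorem eq_of_mem_seg_of_mem_seg (hRT : IsRTree T) (hz : z ∈ seg a y) (hy : y ∈ seg a z) :
    y = z :=
  (hRT.seg_inter_seg_of_mem hz).subset ⟨hy, hRT.right_mem_seg z y⟩

theorem seg_union_seg (hRT : IsRTree T) (h : seg a b ∩ seg b c ⊆ {b}) :
    seg a b ∪ seg b c = seg a c := by
  rcases eq_or_ne a b with rfl | hab
  · rw [seg_self, singleton_union, insert_eq_of_mem (left_mem_seg a c)]
  rcases eq_or_ne b c with rfl | hbc
  · rw [seg_self, union_singleton, insert_eq_of_mem (hRT.right_mem_seg a b)]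
  exact (hRT.seg_eq ((hRT.arcFrom_seg hab).union (hRT.arcFrom_seg hbc) h)).symm

theorem mem_seg_of_mem_seg_of_mem_seg (hRT : IsRTree T) (hx : x ∈ seg a y) (hy : y ∈ seg a b) :
    y ∈ seg x b := by
  have hxy : seg x y ⊆ seg a y := by
    rw [hRT.seg_comm x, hRT.seg_comm a]
    exact hRT.seg_subset_of_mem (hRT.seg_comm a y ▸ hx)
  rw [← hRT.seg_union_seg ((inter_subset_inter_left _ hxy).trans
    (hRT.seg_inter_seg_of_mem hy).subset)]
  exact Or.inl (hRT.right_mem_seg x y)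

theorem exists_mem_seg_inter [T2Space T] (hRT : IsRTree T) (a b c : T) :
    ∃ m ∈ seg a b, m ∈ seg a c ∧ m ∈ seg b c := by
  obtain ⟨m, hmab, hmca, hm⟩ :=
    hRT.exists_first_mem_seg (a := c) (hRT.isClosed_seg a b) (left_mem_seg a b)
  refine ⟨m, hmab, hRT.seg_comm c a ▸ hmca, ?_⟩
  have hbm : seg b m ⊆ seg a b := by
    rw [hRT.seg_comm a b]
    exact hRT.seg_subset_of_mem (hRT.seg_comm a b ▸ hmab)
  rw [← hRT.seg_union_seg (b := m) (by
    rw [hRT.seg_comm m c, inter_comm]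
    exact (inter_subset_inter_right _ hbm).trans hm)]
  exact Or.inl (hRT.right_mem_seg b m)

theorem inter_sInter_nonempty [T2Space T] (hRT : IsRTree T) {A : Set T} {𝒮 : Set (Set T)}
    (hA : IsClosed A) (hAc : IsArcConvex A) (h𝒮 : ∀ F ∈ 𝒮, IsArcConvex F) (hA₀ : A.Nonempty)
    (h𝒮₀ : (⋂₀ 𝒮).Nonempty) (hAF : ∀ F ∈ 𝒮, (A ∩ F).Nonempty) : (A ∩ ⋂₀ 𝒮).Nonempty := by
  obtain ⟨x, hx⟩ := h𝒮₀
  obtain ⟨q₀, hq₀⟩ := hA₀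
  obtain ⟨q, hqA, -, hq⟩ := hRT.exists_first_mem_seg (a := x) hA hq₀
  refine ⟨q, hqA, fun F hF => ?_⟩
  obtain ⟨y, hyA, hyF⟩ := hAF F hF
  obtain ⟨m, hmxq, hmxy, hmqy⟩ := hRT.exists_mem_seg_inter x q y
  have hmq : m = q := hq ⟨hmxq, hAc q hqA y hyA hmqy⟩
  exact hmq ▸ h𝒮 F hF x (hx F hF) y hyF hmxy

theorem sInter_nonempty_of_pairwise [T2Space T] [Nonempty T] (hRT : IsRTree T) (𝒮 : Finset (Set T))
    (hcl : ∀ F ∈ 𝒮, IsClosed F) (hc : ∀ F ∈ 𝒮, IsArcConvex F)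
    (hpair : ∀ F ∈ 𝒮, ∀ F' ∈ 𝒮, (F ∩ F').Nonempty) : (⋂₀ (𝒮 : Set (Set T))).Nonempty := by
  classical
  induction 𝒮 using Finset.induction_on with
  | empty => simp
  | insert A 𝒮 _ ih =>
    simp only [Finset.mem_insert, forall_eq_or_imp] at hcl hc hpair
    rw [Finset.coe_insert, sInter_insert]
    exact hRT.inter_sInter_nonempty hcl.1 hc.1 hc.2 (inter_self A ▸ hpair.1.1)
      (ih hcl.2 hc.2 fun F hF => (hpair.2 F hF).2) hpair.1.2

end IsRTree

end Segments

section Action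

variable {G T : Type*} [Group G] [TopologicalSpace T] [MulAction G T]

theorem IsRTree.smul_mem_seg (hRT : IsRTree T) {g : G} (hg : Continuous fun x : T => g • x)
    {a b y : T} (hy : y ∈ seg a b) : g • y ∈ seg (g • a) (g • b) :=
  hRT.image_seg hg (MulAction.injective g) a b ▸ mem_image_of_mem _ hy

namespace NonNesting

theorem smul_eq_of_smul_mem_seg (hnn : NonNesting G T) (hRT : IsRTree T) {k : G}
    (hk : Continuous fun x : T => k • x) {a y : T} (ha : k • a = a) (hy : k • y ∈ seg a y) :
    k • y = y := by
  by_contra hne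
  have hay : a ≠ y := by
    rintro rfl
    exact hne ha
  have himage : (fun x => k • x) '' seg a y = seg a (k • y) := by
    rw [hRT.image_seg hk (MulAction.injective k), ha]
  refine hnn k a y _ (hRT.arcFrom_seg hay) ⟨himage ▸ hRT.seg_subset_of_mem hy, fun h => hne ?_⟩
  exact (hRT.eq_of_mem_seg_of_mem_seg hy (himage ▸ h (hRT.right_mem_seg a y))).symm

theorem isArcConvex_fixedBy (hnn : NonNesting G T) (hRT : IsRTree T)
    (hcont : ∀ g : G, Continuous fun x : T => g • x) (g : G) : IsArcConvex (fixedBy T g) := by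
  intro a (ha : g • a = a) b (hb : g • b = b) y hy
  have hgy : g • y ∈ seg a b := by simpa [ha, hb] using hRT.smul_mem_seg (hcont g) hy
  rcases hRT.mem_seg_or_mem_seg hgy hy with h | h
  · exact hnn.smul_eq_of_smul_mem_seg hRT (hcont g) ha h
  · have := hnn.smul_eq_of_smul_mem_seg hRT (hcont g⁻¹) (inv_smul_eq_iff.2 ha.symm)
      (by rwa [inv_smul_smul] : g⁻¹ • g • y ∈ seg a (g • y))
    rw [inv_smul_smul] at this
    exact this.symm

theorem mem_seg_smul (hnn : NonNesting G T) (hRT : IsRTree T)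
    (hcont : ∀ g : G, Continuous fun x : T => g • x) {g : G} {x p : T} (hp : g • p = p)
    (hfirst : seg x p ∩ fixedBy T g ⊆ {p}) : p ∈ seg x (g • x) := by
  have hinter : seg x p ∩ seg p (g • x) ⊆ {p} := by
    rintro z ⟨hzx, hzg⟩
    rw [← hp, ← hRT.image_seg (hcont g) (MulAction.injective g), hRT.seg_comm] at hzg
    obtain ⟨z, hz, rfl⟩ := hzg
    dsimp only at hzx ⊢
    rw [hRT.seg_comm] at hz hzx
    rcases hRT.mem_seg_or_mem_seg hzx hz with h | h
    · have hfix : g • z = z := hnn.smul_eq_of_smul_mem_seg hRT (hcont g) hp h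
      rw [hfix]
      exact hfirst ⟨hRT.seg_comm p x ▸ hz, hfix⟩
    · have := hnn.smul_eq_of_smul_mem_seg hRT (hcont g⁻¹) (inv_smul_eq_iff.2 hp.symm)
        (by rwa [inv_smul_smul] : g⁻¹ • g • z ∈ seg p (g • z))
      exact hfirst ⟨hRT.seg_comm p x ▸ hzx, (inv_smul_eq_iff.1 this).symm⟩
  rw [← hRT.seg_union_seg hinter]
  exact Or.inl (hRT.right_mem_seg x p)

/-- The step of Serre's lemma where `α` lies between `w` and `β`. -/
theorem smul_eq_of_mem_seg (hnn : NonNesting G T) (hRT : IsRTree T)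
    (hcont : ∀ g : G, Continuous fun x : T => g • x) {g h : G} {w α β : T}
    (hw : (g * h) • w = w) (hα : g • α = α) (hβ : h • β = β) (hαβ : α ∈ seg w β)
    (hβw : β ∈ seg w (h • w)) : g • β = β := by
  have hgβ : g • β ∈ seg w α := by
    have := hRT.smul_mem_seg (hcont g) (hRT.mem_seg_of_mem_seg_of_mem_seg hαβ hβw)
    rwa [hα, ← mul_smul, hw, hRT.seg_comm] at this
  have := hnn.smul_eq_of_smul_mem_seg hRT (hcont (g * h)) hw
    (by rw [mul_smul, hβ]; exact hRT.seg_subset_of_mem hαβ hgβ)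
  rwa [mul_smul, hβ] at this

theorem exists_smul_eq_and_smul_eq [T2Space T] (hnn : NonNesting G T) (hRT : IsRTree T)
    (hcont : ∀ g : G, Continuous fun x : T => g • x) {g h : G} (hg : ∃ x : T, g • x = x)
    (hh : ∃ x : T, h • x = x) (hgh : ∃ x : T, (g * h) • x = x) :
    ∃ x : T, g • x = x ∧ h • x = x := by
  obtain ⟨w, hw⟩ := hgh
  have hclosed (k : G) : IsClosed (fixedBy T k) := isClosed_eq (hcont k) continuous_id
  obtain ⟨β, hβ, -, hβfirst⟩ := hRT.exists_first_mem_seg (a := w) (hclosed h) hh.choose_spec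
  obtain ⟨α, hα, -, hαfirst⟩ := hRT.exists_first_mem_seg (a := w) (hclosed g⁻¹)
    (inv_smul_eq_iff.2 hg.choose_spec.symm)
  have hβw : β ∈ seg w (h • w) := hnn.mem_seg_smul hRT hcont hβ hβfirst
  have hαw : α ∈ seg w (g⁻¹ • w) := hnn.mem_seg_smul hRT hcont hα hαfirst
  have hα' : g • α = α := (inv_smul_eq_iff.1 hα).symm
  have hw' : g⁻¹ • w = h • w := by rw [inv_smul_eq_iff, ← mul_smul, hw]
  rcases hRT.mem_seg_or_mem_seg (hw' ▸ hαw) hβw with hαβ | hβα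
  · exact ⟨β, hnn.smul_eq_of_mem_seg hRT hcont hw hα' hβ hαβ hβw, hβ⟩
  · have := hnn.smul_eq_of_mem_seg hRT hcont (g := h⁻¹) (h := g⁻¹)
      (by rw [← mul_inv_rev, inv_smul_eq_iff, hw]) (inv_smul_eq_iff.2 hβ.symm) hα hβα hαw
    exact ⟨α, hα', (inv_smul_eq_iff.1 this).symm⟩

end NonNesting

end Action

theorem stmt17 {T G : Type*} [MetricSpace T] [Group G] [MulAction G T]
    (hRT : IsRTree T) (hcont : ∀ g : G, Continuous fun x : T => g • x)
    (hnn : NonNesting G T) (hfg : Group.FG G)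
    (hell : ∀ g : G, ∃ x : T, g • x = x) :
    ∃ x : T, ∀ g : G, g • x = x := by
  have : Nonempty T := (hell 1).nonempty
  obtain ⟨S, hS⟩ := hfg.out
  obtain ⟨x, hx⟩ := hRT.sInter_nonempty_of_pairwise (S.image (fixedBy T))
    (Finset.forall_mem_image.2 fun g _ => isClosed_eq (hcont g) continuous_id)
    (Finset.forall_mem_image.2 fun g _ => hnn.isArcConvex_fixedBy hRT hcont g)
    (Finset.forall_mem_image.2 fun g _ => Finset.forall_mem_image.2 fun h _ =>
      hnn.exists_smul_eq_and_smul_eq hRT hcont (hell g) (hell h) (hell (g * h)))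
  have hle : Subgroup.closure (S : Set G) ≤ stabilizer G x :=
    (Subgroup.closure_le _).2 fun g hg => hx (fixedBy T g) (Finset.mem_image_of_mem _ hg)
  exact ⟨x, fun g => hle (hS ▸ Subgroup.mem_top g)⟩
end
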